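/- arXiv:2210.11053 — 7 statements merged into one kernel-verified Lean document; each statement's English description precedes it below -/
import Mathlib

section
/- For each n ∈ ℕ, let (Â^{(n)}_{ij})_{1≤i,j≤n} be mutually independent Poisson random variables with means μ^{(n)}_{ij} satisfying μ^{(n)}_{ij} ≤ C for a constant C independent of n. Then n^{-3}·( Σ_{i,j,k≤n} Â^{(n)}_{ik} Â^{(n)}_{kj} − Σ_{i,j,k≤n} μ^{(n)}_{ik} μ^{(n)}_{kj} ) converges to 0 in probability as n → ∞. -/
open MeasureTheory ProbabilityTheory Filter
open scoped ProbabilityTheory NNReal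

/-!
Write `R k = ∑ i, Â i k` and `L k = ∑ j, Â k j` for the in- and out-degree of `k`; the walk count
is `∑ k, R k * L k`. Each degree is a sum of `n` independent Poisson variables, so its mean and
variance are at most `C n`. Splitting `R L - r c = (R - r) L + r (L - c)` and applying Young's
inequality with weight `√n` bounds `E |R k * L k - r k * c k|` by `O(n ^ (3/2))`, with no
independence between `R k` and `L k` needed (they share `Â k k`). So the normalized count is
`O(n ^ (-1/2))` in `L¹`, and Markov's inequality gives convergence in probability.
-/

section Poisson

open Real Nat

lemma exp_neg_mul_pow_succ_div_factorial_mul (r : ℝ) (n : ℕ) :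
    exp (-r) * r ^ (n + 1) / (n + 1)! * ((n : ℝ) + 1) = r * (exp (-r) * r ^ n / n !) := by
  rw [Nat.factorial_succ]
  push_cast
  field_simp
  ring

lemma hasSum_poisson_mul_natCast (r : ℝ≥0) :
    HasSum (fun n : ℕ => exp (-r) * r ^ n / n ! * n) r := by
  rw [← hasSum_nat_add_iff' 1, Finset.sum_range_one, Nat.cast_zero, mul_zero, sub_zero,
    ← mul_one (r : ℝ)]
  refine ((hasSum_one_poissonMeasure r).mul_left (r : ℝ)).congr_fun fun n => ?_
  rw [Nat.cast_succ, exp_neg_mul_pow_succ_div_factorial_mul, mul_one]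

lemma hasSum_poisson_mul_natCast_sq (r : ℝ≥0) :
    HasSum (fun n : ℕ => exp (-r) * r ^ n / n ! * n ^ 2) (r ^ 2 + r) := by
  rw [← hasSum_nat_add_iff' 1, Finset.sum_range_one, Nat.cast_zero, zero_pow two_ne_zero,
    mul_zero, sub_zero, sq (r : ℝ), ← _root_.mul_add_one]
  refine (((hasSum_poisson_mul_natCast r).add (hasSum_one_poissonMeasure r)).mul_left
    (r : ℝ)).congr_fun fun n => ?_
  rw [Nat.cast_succ, sq, ← mul_assoc, exp_neg_mul_pow_succ_div_factorial_mul]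
  ring

lemma integral_natCast_poissonMeasure (r : ℝ≥0) : ∫ n, (n : ℝ) ∂Po(r) = r := by
  rw [integral_poissonMeasure]
  exact (hasSum_poisson_mul_natCast r).tsum_eq

lemma integral_natCast_sq_poissonMeasure (r : ℝ≥0) : ∫ n, (n : ℝ) ^ 2 ∂Po(r) = r ^ 2 + r := by
  rw [integral_poissonMeasure]
  exact (hasSum_poisson_mul_natCast_sq r).tsum_eq

lemma integrable_natCast_sq_poissonMeasure (r : ℝ≥0) :
    Integrable (fun n : ℕ => (n : ℝ) ^ 2) Po(r) := by
  rw [integrable_poissonMeasure_iff]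
  simpa using (hasSum_poisson_mul_natCast_sq r).summable

end Poisson

namespace ProbabilityTheory.HasLaw

variable {Ω : Type*} [MeasurableSpace Ω] {P : Measure Ω} {X : Ω → ℕ} {r : ℝ≥0}

lemma memLp_two_natCast_of_poisson (hX : HasLaw X Po(r) P) :
    MemLp (fun ω => (X ω : ℝ)) 2 P := by
  refine (memLp_two_iff_integrable_sq
    (measurable_from_top.comp_aemeasurable hX.aemeasurable).aestronglyMeasurable).2 ?_
  exact (integrable_map_measure .of_discrete hX.aemeasurable).1
    (hX.map_eq ▸ integrable_natCast_sq_poissonMeasure r)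

lemma integral_natCast_of_poisson (hX : HasLaw X Po(r) P) :
    P[fun ω => (X ω : ℝ)] = (r : ℝ) :=
  (hX.integral_comp .of_discrete).trans (integral_natCast_poissonMeasure r)

lemma variance_natCast_of_poisson [IsProbabilityMeasure P] (hX : HasLaw X Po(r) P) :
    Var[fun ω => (X ω : ℝ); P] = (r : ℝ) := by
  rw [variance_eq_sub hX.memLp_two_natCast_of_poisson, hX.integral_natCast_of_poisson,
    show (fun ω => (X ω : ℝ)) ^ 2 = (fun n : ℕ => (n : ℝ) ^ 2) ∘ X from rfl,
    hX.integral_comp .of_discrete, integral_natCast_sq_poissonMeasure]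
  ring

end ProbabilityTheory.HasLaw

lemma abs_mul_le_of_pos (u v : ℝ) {t : ℝ} (ht : 0 < t) :
    |u * v| ≤ (t * u ^ 2 + v ^ 2 / t) / 2 := by
  rw [le_div_iff₀ two_pos, ← mul_le_mul_iff_of_pos_left ht]
  have : t * (t * u ^ 2 + v ^ 2 / t) = (t * |u|) ^ 2 + |v| ^ 2 := by
    field_simp; simp only [sq_abs]
  rw [this, abs_mul]
  nlinarith [sq_nonneg (t * |u| - |v|)]

lemma abs_mul_sub_mul_le (x y a b : ℝ) {t : ℝ} (ht : 0 < t) :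
    |x * y - a * b| ≤ (t * (x - a) ^ 2 + y ^ 2 / t) / 2 + |a| * ((y - b) ^ 2 / t + t) / 2 := by
  have hyb : |y - b| ≤ ((y - b) ^ 2 / t + t) / 2 := by
    simpa [div_eq_inv_mul] using abs_mul_le_of_pos (y - b) 1 (inv_pos.2 ht)
  calc |x * y - a * b| = |(x - a) * y + a * (y - b)| := by ring_nf
    _ ≤ |(x - a) * y| + |a| * |y - b| := by rw [← abs_mul]; exact abs_add_le _ _
    _ ≤ _ := by
      rw [mul_div_assoc]
      gcongr
      exact abs_mul_le_of_pos _ _ ht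

section Estimates

variable {Ω : Type*} [MeasurableSpace Ω] {P : Measure Ω}

lemma integral_abs_mul_sub_mul_le [IsProbabilityMeasure P] {X Y : Ω → ℝ} (hX : MemLp X 2 P)
    (hY : MemLp Y 2 P) {t : ℝ} (ht : 0 < t) :
    ∫ ω, |X ω * Y ω - P[X] * P[Y]| ∂P ≤
      (t * Var[X; P] + (Var[Y; P] + P[Y] ^ 2) / t) / 2 + |P[X]| * (Var[Y; P] / t + t) / 2 := by
  have iX : Integrable (fun ω => (X ω - P[X]) ^ 2) P := (hX.sub (memLp_const _)).integrable_sq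
  have iY : Integrable (fun ω => (Y ω - P[Y]) ^ 2) P := (hY.sub (memLp_const _)).integrable_sq
  have iY2 : Integrable (fun ω => Y ω ^ 2) P := hY.integrable_sq
  have hY2 : ∫ ω, Y ω ^ 2 ∂P = Var[Y; P] + P[Y] ^ 2 := by
    rw [variance_eq_sub hY]; simp
  calc ∫ ω, |X ω * Y ω - P[X] * P[Y]| ∂P
      ≤ ∫ ω, ((t * (X ω - P[X]) ^ 2 + Y ω ^ 2 / t) / 2
          + |P[X]| * ((Y ω - P[Y]) ^ 2 / t + t) / 2) ∂P :=
        integral_mono_of_nonneg (.of_forall fun _ => abs_nonneg _) (by fun_prop)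
          (.of_forall fun ω => abs_mul_sub_mul_le _ _ _ _ ht)
    _ = _ := by
      rw [integral_add (by fun_prop) (by fun_prop), integral_div, integral_div,
        integral_add (by fun_prop) (by fun_prop), integral_const_mul, integral_div,
        integral_const_mul, integral_add (by fun_prop) (by fun_prop), integral_div,
        integral_const, ← variance_eq_integral hX.aemeasurable,
        ← variance_eq_integral hY.aemeasurable, hY2]
      simp

lemma integral_abs_mul_sub_mul_le_of_le [IsProbabilityMeasure P] {X Y : Ω → ℝ}
    (hX : MemLp X 2 P) (hY : MemLp Y 2 P) {K m : ℝ} (hm : 1 ≤ m)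
    (hXmean : |P[X]| ≤ m * K) (hYmean : |P[Y]| ≤ m * K)
    (hXvar : Var[X; P] ≤ m * K) (hYvar : Var[Y; P] ≤ m * K) :
    ∫ ω, |X ω * Y ω - P[X] * P[Y]| ∂P ≤ (K ^ 2 + 2 * K) * m * √m := by
  obtain ⟨s, hs, rfl⟩ : ∃ s, 1 ≤ s ∧ m = s ^ 2 :=
    ⟨√m, Real.one_le_sqrt.2 hm, (Real.sq_sqrt (by linarith)).symm⟩
  have hs0 : 0 < s := by linarith
  have hK : 0 ≤ K := nonneg_of_mul_nonneg_right ((variance_nonneg X P).trans hXvar) (by positivity)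
  have hY2 : P[Y] ^ 2 ≤ (s ^ 2 * K) ^ 2 := by
    rw [← sq_abs]; gcongr
  refine (integral_abs_mul_sub_mul_le hX hY hs0).trans ?_
  rw [Real.sqrt_sq hs0.le]
  calc (s * Var[X; P] + (Var[Y; P] + P[Y] ^ 2) / s) / 2 + |P[X]| * (Var[Y; P] / s + s) / 2
      ≤ (s * (s ^ 2 * K) + (s ^ 2 * K + (s ^ 2 * K) ^ 2) / s) / 2
          + s ^ 2 * K * (s ^ 2 * K / s + s) / 2 := by
        gcongr
        exact add_nonneg (div_nonneg (variance_nonneg _ _) hs0.le) hs0.le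
    _ = (K ^ 2 + K) * s ^ 3 + K / 2 * s := by field_simp; ring
    _ ≤ (K ^ 2 + 2 * K) * s ^ 2 * s := by
        nlinarith [pow_le_pow_right₀ hs (show 1 ≤ 3 by norm_num)]

lemma tendsto_measure_le_abs_of_integral_abs_le {κ : Type*} {l : Filter κ} {Z : κ → Ω → ℝ}
    {b : κ → ℝ} (hZ : ∀ i, Integrable (Z i) P) (hb : Tendsto b l (nhds 0))
    (hle : ∀ᶠ i in l, ∫ ω, |Z i ω| ∂P ≤ b i) :
    ∀ ε > 0, Tendsto (fun i => P {ω | ε ≤ |Z i ω|}) l (nhds 0) := by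
  have hnorm : ∀ i, eLpNorm (Z i - 0) 1 P = ENNReal.ofReal (∫ ω, |Z i ω| ∂P) := fun i => by
    rw [sub_zero, eLpNorm_one_eq_lintegral_enorm, ← ofReal_integral_norm_eq_lintegral_enorm (hZ i)]
    rfl
  have hconv : TendstoInMeasure P Z l 0 := by
    refine tendstoInMeasure_of_tendsto_eLpNorm one_ne_zero
      (fun i => (hZ i).aestronglyMeasurable) aestronglyMeasurable_const ?_
    simp_rw [hnorm]
    exact tendsto_of_tendsto_of_tendsto_of_le_of_le' tendsto_const_nhds
      (by simpa using ENNReal.tendsto_ofReal hb) (.of_forall fun _ => zero_le)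
      (hle.mono fun i h => ENNReal.ofReal_le_ofReal h)
  simpa using tendstoInMeasure_iff_norm.1 hconv

variable {ι : Type*} [Fintype ι]

lemma abs_integral_sum_le {Y : ι → Ω → ℝ} (hY : ∀ i, Integrable (Y i) P) {K : ℝ}
    (hK : ∀ i, |P[Y i]| ≤ K) : |∫ ω, ∑ i, Y i ω ∂P| ≤ Fintype.card ι * K := by
  rw [integral_finsetSum _ fun i _ => hY i]
  calc |∑ i, P[Y i]| ≤ ∑ i, |P[Y i]| := Finset.abs_sum_le_sum_abs _ _
    _ ≤ ∑ _i : ι, K := Finset.sum_le_sum fun i _ => hK i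
    _ = Fintype.card ι * K := by simp

lemma variance_sum_le {Y : ι → Ω → ℝ} (hY : ∀ i, MemLp (Y i) 2 P)
    (hindep : Pairwise fun i j => IndepFun (Y i) (Y j) P) {K : ℝ} (hK : ∀ i, Var[Y i; P] ≤ K) :
    Var[fun ω => ∑ i, Y i ω; P] ≤ Fintype.card ι * K := by
  rw [← Finset.sum_fn, IndepFun.variance_sum (fun i _ => hY i) fun i _ j _ hij => hindep hij]
  calc ∑ i, Var[Y i; P] ≤ ∑ _i : ι, K := Finset.sum_le_sum fun i _ => hK i
    _ = Fintype.card ι * K := by simp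

lemma integral_abs_sum_mul_sum_sub_le [IsProbabilityMeasure P] [Nonempty ι]
    {Y Z : ι → Ω → ℝ} (hY : ∀ i, MemLp (Y i) 2 P) (hZ : ∀ i, MemLp (Z i) 2 P)
    (hYindep : Pairwise fun i j => IndepFun (Y i) (Y j) P)
    (hZindep : Pairwise fun i j => IndepFun (Z i) (Z j) P) {K : ℝ}
    (hYmean : ∀ i, |P[Y i]| ≤ K) (hZmean : ∀ i, |P[Z i]| ≤ K)
    (hYvar : ∀ i, Var[Y i; P] ≤ K) (hZvar : ∀ i, Var[Z i; P] ≤ K) :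
    ∫ ω, |(∑ i, Y i ω) * (∑ i, Z i ω) - P[fun ω => ∑ i, Y i ω] * P[fun ω => ∑ i, Z i ω]| ∂P ≤
      (K ^ 2 + 2 * K) * Fintype.card ι * √(Fintype.card ι) :=
  integral_abs_mul_sub_mul_le_of_le (memLp_finsetSum _ fun i _ => hY i)
    (memLp_finsetSum _ fun i _ => hZ i) (Nat.one_le_cast.2 Fintype.card_pos)
    (abs_integral_sum_le (fun i => (hY i).integrable one_le_two) hYmean)
    (abs_integral_sum_le (fun i => (hZ i).integrable one_le_two) hZmean)
    (variance_sum_le hY hYindep hYvar) (variance_sum_le hZ hZindep hZvar)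

lemma sum_sum_sum_mul_eq_sum_mul_sum {R : Type*} [CommSemiring R] (f g : ι → ι → R) :
    ∑ i, ∑ j, ∑ k, f i k * g k j = ∑ k, (∑ i, f i k) * ∑ j, g k j := by
  simp_rw [Finset.sum_mul_sum]
  exact (Finset.sum_congr rfl fun i _ => Finset.sum_comm).trans Finset.sum_comm

lemma integrable_sum_sum_sum_mul {X : ι → ι → Ω → ℝ} (hX : ∀ i j, MemLp (X i j) 2 P) :
    Integrable (fun ω => ∑ i, ∑ j, ∑ k, X i k ω * X k j ω) P :=
  integrable_finsetSum _ fun i _ => integrable_finsetSum _ fun j _ =>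
    integrable_finsetSum _ fun k _ => (hX i k).integrable_mul (hX k j)

lemma integral_abs_sum_sum_sum_mul_sub_le [IsProbabilityMeasure P] [Nonempty ι]
    {X : ι → ι → Ω → ℝ} (hindep : iIndepFun (fun p : ι × ι => X p.1 p.2) P)
    (hX : ∀ i j, MemLp (X i j) 2 P) {m : ι → ι → ℝ} (hmean : ∀ i j, P[X i j] = m i j)
    {K : ℝ} (hmK : ∀ i j, |m i j| ≤ K) (hvar : ∀ i j, Var[X i j; P] ≤ K) :
    ∫ ω, |∑ i, ∑ j, ∑ k, X i k ω * X k j ω - ∑ i, ∑ j, ∑ k, m i k * m k j| ∂P ≤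
      (K ^ 2 + 2 * K) * Fintype.card ι ^ 2 * √(Fintype.card ι) := by
  set n : ℝ := (Fintype.card ι : ℝ)
  set R : ι → Ω → ℝ := fun k ω => ∑ i, X i k ω
  set L : ι → Ω → ℝ := fun k ω => ∑ j, X k j ω
  have hRmean : ∀ k, P[R k] = ∑ i, m i k := fun k => by
    rw [integral_finsetSum _ fun i _ => (hX i k).integrable one_le_two]
    exact Finset.sum_congr rfl fun i _ => hmean i k
  have hLmean : ∀ k, P[L k] = ∑ j, m k j := fun k => by
    rw [integral_finsetSum _ fun j _ => (hX k j).integrable one_le_two]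
    exact Finset.sum_congr rfl fun j _ => hmean k j
  have hintegrable : ∀ k, Integrable (fun ω => |R k ω * L k ω - P[R k] * P[L k]|) P := fun k =>
    (((memLp_finsetSum _ fun i _ => hX i k).integrable_mul
      (memLp_finsetSum _ fun j _ => hX k j)).sub (integrable_const _)).abs
  have hpair : ∀ k, ∫ ω, |R k ω * L k ω - P[R k] * P[L k]| ∂P ≤ (K ^ 2 + 2 * K) * n * √n :=
    fun k => integral_abs_sum_mul_sum_sub_le (fun i => hX i k) (fun j => hX k j)
      (fun i i' h => hindep.indepFun (i := (i, k)) (j := (i', k)) (by simpa using h))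
      (fun j j' h => hindep.indepFun (i := (k, j)) (j := (k, j')) (by simpa using h))
      (fun i => hmean i k ▸ hmK i k) (fun j => hmean k j ▸ hmK k j)
      (fun i => hvar i k) (fun j => hvar k j)
  have hsum : ∀ ω, ∑ i, ∑ j, ∑ k, X i k ω * X k j ω - ∑ i, ∑ j, ∑ k, m i k * m k j
      = ∑ k, (R k ω * L k ω - P[R k] * P[L k]) := fun ω => by
    simp only [sum_sum_sum_mul_eq_sum_mul_sum, Finset.sum_sub_distrib, hRmean, hLmean, R, L]
  calc ∫ ω, |∑ i, ∑ j, ∑ k, X i k ω * X k j ω - ∑ i, ∑ j, ∑ k, m i k * m k j| ∂P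
      ≤ ∫ ω, ∑ k, |R k ω * L k ω - P[R k] * P[L k]| ∂P := by
        exact integral_mono_of_nonneg (.of_forall fun _ => abs_nonneg _)
          (integrable_finsetSum _ fun k _ => hintegrable k)
          (.of_forall fun ω => (congrArg abs (hsum ω)).trans_le (Finset.abs_sum_le_sum_abs _ _))
    _ = ∑ k, ∫ ω, |R k ω * L k ω - P[R k] * P[L k]| ∂P :=
        integral_finsetSum _ fun k _ => hintegrable k
    _ ≤ ∑ _k : ι, (K ^ 2 + 2 * K) * n * √n := Finset.sum_le_sum fun k _ => hpair k
    _ = (K ^ 2 + 2 * K) * n ^ 2 * √n := by simp [n]; ring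

end Estimates

/-- for each `n`, let `(Â^{(n)}_{ij})_{i,j ≤ n}` be mutually independent
Poisson random variables with uniformly bounded means `μ^{(n)}_{ij} ≤ C`.  Then the
normalized count of directed walks of length 2,
`n⁻³ (∑_{i,j,k} Â_{ik} Â_{kj} − ∑_{i,j,k} μ_{ik} μ_{kj})`, converges to `0` in probability. -/
theorem walks_length_two_lln
    {Ω : Type*} [MeasureSpace Ω] [IsProbabilityMeasure (ℙ : Measure Ω)]
    (A : (n : ℕ) → Fin n → Fin n → Ω → ℕ)
    (μ : (n : ℕ) → Fin n → Fin n → ℝ≥0) (C : ℝ≥0)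
    (hindep : ∀ n, iIndepFun
      (fun p : Fin n × Fin n => A n p.1 p.2) ℙ)
    (hdist : ∀ n (i j : Fin n), Measure.map (A n i j) ℙ = poissonMeasure (μ n i j))
    (hbound : ∀ n (i j : Fin n), μ n i j ≤ C) :
    ∀ ε > 0, Tendsto
      (fun n : ℕ => ℙ {ω | ε ≤
        |((n : ℝ) ^ 3)⁻¹ *
          ((∑ i : Fin n, ∑ j : Fin n, ∑ k : Fin n, (A n i k ω : ℝ) * (A n k j ω : ℝ))
            - ∑ i : Fin n, ∑ j : Fin n, ∑ k : Fin n, (μ n i k : ℝ) * (μ n k j : ℝ))|})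
      atTop (nhds 0) := by
  have hlaw : ∀ n (i j : Fin n), HasLaw (A n i j) (poissonMeasure (μ n i j)) ℙ := fun n i j =>
    ⟨.of_map_ne_zero (hdist n i j ▸ IsProbabilityMeasure.ne_zero _), hdist n i j⟩
  have hmem n i j := (hlaw n i j).memLp_two_natCast_of_poisson
  refine tendsto_measure_le_abs_of_integral_abs_le
    (b := fun n : ℕ => ((C : ℝ) ^ 2 + 2 * C) / √n)
    (fun n => ((integrable_sum_sum_sum_mul (hmem n)).sub (integrable_const _)).const_mul _)
    (tendsto_const_nhds.div_atTop (Real.tendsto_sqrt_atTop.comp tendsto_natCast_atTop_atTop)) ?_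
  filter_upwards [eventually_ge_atTop 1] with n hn
  have : Nonempty (Fin n) := ⟨⟨0, hn⟩⟩
  have hL1 := integral_abs_sum_sum_sum_mul_sub_le
    ((hindep n).comp (fun _ => ((↑) : ℕ → ℝ)) fun _ => measurable_from_top) (hmem n)
    (fun i j => (hlaw n i j).integral_natCast_of_poisson)
    (fun i j => (abs_of_nonneg (μ n i j).coe_nonneg).trans_le (by exact_mod_cast hbound n i j))
    (fun i j => (hlaw n i j).variance_natCast_of_poisson.trans_le (by exact_mod_cast hbound n i j))
  rw [Fintype.card_fin] at hL1
  have hn0 : (0 : ℝ) < n := by exact_mod_cast hn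
  simp_rw [abs_mul, abs_of_pos (inv_pos.2 (pow_pos hn0 3)), integral_const_mul]
  calc ((n : ℝ) ^ 3)⁻¹ * ∫ ω, |_| ∂ℙ
      ≤ ((n : ℝ) ^ 3)⁻¹ * (((C : ℝ) ^ 2 + 2 * C) * n ^ 2 * √n) := by gcongr; exact hL1
    _ = ((C : ℝ) ^ 2 + 2 * C) / √n := by
        field_simp
        rw [Real.sq_sqrt hn0.le]
        ring
end

section
/- For each n ∈ ℕ, let N_n = {1,…,n} with group assignment g_n : N_n → G (G a fixed finite set of groups), and let (Â^{(n)}_{ij})_{i,j≤n} be mutually independent Poisson random variables with means μ^{(n)}_{ij} ≤ C for a constant C independent of n. Suppose lim inf_n n^{-3}·Σ_k d^i_k d^o_k > 0, and suppose there exists δ > 0 such that Σ_{r∈G} a^{(2)}_r b^{(2)}_r ≤ 1 − δ for all n. Then the sampled assortativity on paths of length 2 satisfies r̂^{(2)} − r^{(2)} → 0 in probability as n → ∞. -/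
/-!
Write `S_w(A) = ∑_{i,k,j} w i j · A i k · A k j` for a weight `w` with values in `[0, 1]`, so that
every path fraction is a ratio `S_w / S_1`. Two summands of `S_w(Â)` are independent unless the
two paths share an edge, and a path shares an edge with at most `4n` others; as Poisson fourth
moments are at most `24 e^C` (from `k⁴ ≤ 24 · 2^k`), `Var S_w(Â) = O(n⁴)`. The mean of `S_w(Â)`
differs from `S_w(μ)` only through the `n` degenerate paths `i = k = j`. Chebyshev's inequality
then gives `S_w(Â) - S_w(μ) = o(n³)` in probability, while the density hypothesis makes
`S_1(μ) ≥ c n³`, so each sampled fraction `ê_{rs}` is close to `e_{rs}` with high probability.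
Finally, the assortativity is uniformly continuous in the mixing matrix `e` on the region where
`1 - ∑_r a_r b_r` stays away from `0`, which is what the nondegeneracy hypothesis provides.
-/

open MeasureTheory ProbabilityTheory Filter
open scoped ProbabilityTheory NNReal

/-- The fraction of directed paths of length 2 going from group `r` to group `s`,
computed from a (real-valued) adjacency matrix `a` on the node set `Fin n` with group
assignment `g`.  Applied to the matrix of Poisson means `μ` it gives the model fraction
`e^{(2)}_{rs} = (∑_k d^i_{k,r} d^o_{k,s}) / (∑_k d^i_k d^o_k)`, and applied to a sampled
adjacency matrix it gives the sampled fraction `ê^{(2)}_{rs}`. -/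
noncomputable def pathFrac2 {G : Type*} [Fintype G] [DecidableEq G] {n : ℕ}
    (g : Fin n → G) (a : Fin n → Fin n → ℝ) (r s : G) : ℝ :=
  (∑ i : Fin n, ∑ j : Fin n, ∑ k : Fin n,
      (if g i = r then (1 : ℝ) else 0) * (if g j = s then (1 : ℝ) else 0) * (a i k * a k j)) /
  (∑ i : Fin n, ∑ j : Fin n, ∑ k : Fin n, a i k * a k j)

/-- The assortativity on paths of length 2:
`r⁽²⁾ = (∑_r e_{rr} − ∑_r a_r b_r) / (1 − ∑_r a_r b_r)` where `e_{rs}` is the fraction of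
length-2 paths from group `r` to group `s`, `a_r = ∑_s e_{rs}` and `b_r = ∑_s e_{sr}`. -/
noncomputable def assort2 {G : Type*} [Fintype G] [DecidableEq G] {n : ℕ}
    (g : Fin n → G) (a : Fin n → Fin n → ℝ) : ℝ :=
  ((∑ r : G, pathFrac2 g a r r) -
      ∑ r : G, (∑ s : G, pathFrac2 g a r s) * (∑ s : G, pathFrac2 g a s r)) /
  (1 - ∑ r : G, (∑ s : G, pathFrac2 g a r s) * (∑ s : G, pathFrac2 g a s r))

open Finset Real
open scoped Topology Nat

lemma pow_four_le_two_pow (k : ℕ) : k ^ 4 ≤ 24 * 2 ^ k := by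
  induction k with
  | zero => norm_num
  | succ m ih =>
    rcases le_or_gt m 5 with h | h
    · interval_cases m <;> norm_num
    · have h3 : 6 * m ^ 3 ≤ m ^ 4 := by rw [pow_succ _ 3, mul_comm]; gcongr; omega
      have h2 : 6 * m ^ 2 ≤ m ^ 3 := by rw [pow_succ _ 2, mul_comm]; gcongr; omega
      have h1 : 6 * m ≤ m ^ 2 := by rw [sq, mul_comm]; gcongr; omega
      calc (m + 1) ^ 4 ≤ 2 * m ^ 4 := by ring_nf; omega
        _ ≤ 24 * 2 ^ (m + 1) := by rw [pow_succ 2 m]; omega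

lemma natCast_mul_le_sum_pow_four (m k : ℕ) :
    (m : ℝ) * k ≤ ((m : ℝ) ^ 4 + (k : ℝ) ^ 4) / 2 := by
  have hsq (j : ℕ) : (j : ℝ) ^ 2 ≤ (j : ℝ) ^ 4 := by
    rcases j with _ | j
    · simp
    · exact_mod_cast Nat.pow_le_pow_right j.succ_pos (by norm_num)
  nlinarith [hsq m, hsq k, sq_nonneg ((m : ℝ) - k)]

lemma mul_mul_mul_le_sum_pow_four {a b c d : ℝ} (ha : 0 ≤ a) (hb : 0 ≤ b) (hc : 0 ≤ c)
    (hd : 0 ≤ d) : a * b * (c * d) ≤ (a ^ 4 + b ^ 4 + c ^ 4 + d ^ 4) / 4 := by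
  have hab : 0 ≤ a * b := by positivity
  have hcd : 0 ≤ c * d := by positivity
  nlinarith [sq_nonneg (a * b - c * d), sq_nonneg (a ^ 2 - b ^ 2), sq_nonneg (c ^ 2 - d ^ 2)]

lemma abs_div_sub_div_le {a b c d : ℝ} (hb : 0 < b) (hd : 0 < d) :
    |a / b - c / d| ≤ (|a - c| + |c / d| * |b - d|) / b := by
  have h : a / b - c / d = ((a - c) + c / d * (d - b)) / b := by field_simp; ring
  rw [h, abs_div, abs_of_pos hb, abs_sub_comm b d]
  gcongr
  exact (abs_add_le _ _).trans_eq (by rw [abs_mul])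

lemma abs_div_sub_div_lt {a b c d θ κ : ℝ} (hκ : 0 < κ) (hd : κ < d) (hc0 : 0 ≤ c) (hcd : c ≤ d)
    (hac : |a - c| < θ) (hbd : |b - d| < θ) (hθ : θ ≤ κ / 2) : |a / b - c / d| < 4 * θ / κ := by
  have hb : κ / 2 < b := by linarith [neg_abs_le (b - d)]
  have hb0 : 0 < b := by linarith
  have hcd' : |c / d| ≤ 1 := by
    rw [abs_of_nonneg (div_nonneg hc0 (by linarith))]
    exact div_le_one_of_le₀ hcd (by linarith)
  calc |a / b - c / d| ≤ (|a - c| + |c / d| * |b - d|) / b := abs_div_sub_div_le hb0 (by linarith)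
    _ ≤ (|a - c| + |b - d|) / b := by gcongr; exact mul_le_of_le_one_left (abs_nonneg _) hcd'
    _ < 2 * θ / b := by gcongr; linarith
    _ ≤ 2 * θ / (κ / 2) := by gcongr; linarith [abs_nonneg (a - c)]
    _ = 4 * θ / κ := by field_simp; ring

lemma abs_sum_sub_sum_le {ι : Type*} [Fintype ι] {f g : ι → ℝ} {η : ℝ}
    (h : ∀ i, |f i - g i| ≤ η) : |∑ i, f i - ∑ i, g i| ≤ Fintype.card ι * η := by
  rw [← sum_sub_distrib]
  exact (abs_sum_le_sum_abs _ _).trans ((sum_le_card_nsmul _ _ _ fun i _ ↦ h i).trans_eq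
    (by rw [card_univ, nsmul_eq_mul]))

lemma tendsto_measure_of_subset_iUnion {Ω α ι : Type*} {mΩ : MeasurableSpace Ω} {P : Measure Ω}
    [Fintype ι] {l : Filter α} {F : α → Set Ω} {E : ι → α → Set Ω}
    (hE : ∀ i, Tendsto (fun a ↦ P (E i a)) l (𝓝 0)) (hF : ∀ᶠ a in l, F a ⊆ ⋃ i, E i a) :
    Tendsto (fun a ↦ P (F a)) l (𝓝 0) := by
  have hsum : Tendsto (fun a ↦ ∑ i, P (E i a)) l (𝓝 0) := by
    simpa using tendsto_finsetSum univ fun i _ ↦ hE i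
  refine tendsto_of_tendsto_of_tendsto_of_le_of_le' tendsto_const_nhds hsum
    (Eventually.of_forall fun _ ↦ zero_le) ?_
  filter_upwards [hF] with a ha using (measure_mono ha).trans (measure_iUnion_fintype_le _ _)

namespace ProbabilityTheory

lemma hasSum_poissonMeasure_mul_two_pow (r : ℝ≥0) :
    HasSum (fun k ↦ exp (-r) * r ^ k / k ! * 2 ^ k) (exp r) := by
  have h := (NormedSpace.expSeries_div_hasSum_exp (2 * (r : ℝ))).mul_left (exp (-r))
  rw [← exp_eq_exp_ℝ, ← exp_add, show -(r : ℝ) + 2 * r = r by ring] at h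
  have e : (fun k : ℕ ↦ exp (-r) * r ^ k / k ! * 2 ^ k) =
      fun k ↦ exp (-r) * ((2 * (r : ℝ)) ^ k / k !) := by
    ext k
    ring
  rwa [e]

lemma integrable_poissonMeasure_of_le_two_pow {r : ℝ≥0} {f : ℕ → ℝ} {c : ℝ}
    (hf : ∀ k, ‖f k‖ ≤ c * 2 ^ k) : Integrable f (poissonMeasure r) :=
  integrable_poissonMeasure_iff.2 <| Summable.of_nonneg_of_le (fun k ↦ by positivity)
    (fun k ↦ by grw [hf k]; exact le_of_eq (by ring))
    ((hasSum_poissonMeasure_mul_two_pow r).mul_left c).summable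

lemma integral_poissonMeasure_le_of_le_two_pow {r : ℝ≥0} {f : ℕ → ℝ} {c : ℝ}
    (hf0 : ∀ k, 0 ≤ f k) (hf : ∀ k, f k ≤ c * 2 ^ k) :
    ∫ k, f k ∂poissonMeasure r ≤ c * exp r := by
  have hint := integrable_poissonMeasure_of_le_two_pow (r := r) (c := c)
    fun k ↦ by rw [Real.norm_of_nonneg (hf0 k)]; exact hf k
  refine hasSum_le (fun k ↦ ?_) (hasSum_integral_poissonMeasure hint)
    ((hasSum_poissonMeasure_mul_two_pow r).mul_left c)
  rw [smul_eq_mul]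
  grw [hf k]
  exact le_of_eq (by ring)

lemma integral_poissonMeasure_natCast (r : ℝ≥0) : ∫ k, (k : ℝ) ∂poissonMeasure r = r := by
  rw [integral_poissonMeasure]
  refine HasSum.tsum_eq <| (hasSum_nat_add_iff' 1).1 ?_
  have hshift : ∀ k : ℕ, exp (-r) * r ^ (k + 1) / (k + 1)! * (k + 1 : ℝ) =
      r * (exp (-r) * r ^ k / k !) := fun k ↦ by
    rw [Nat.factorial_succ]
    push_cast
    field_simp
    ring
  simpa [hshift] using (hasSum_one_poissonMeasure r).mul_left (r : ℝ)

section PoissonVariable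

variable {Ω : Type*} {mΩ : MeasurableSpace Ω} {P : Measure Ω} {X : Ω → ℕ} {r : ℝ≥0}

lemma aestronglyMeasurable_comp_of_nat (hX : AEMeasurable X P) (f : ℕ → ℝ) :
    AEStronglyMeasurable (fun ω ↦ f (X ω)) P :=
  ((measurable_of_countable f).comp_aemeasurable hX).aestronglyMeasurable

lemma HasLaw.integral_natCast_of_poisson_s4 (hX : HasLaw X (poissonMeasure r) P) :
    ∫ ω, (X ω : ℝ) ∂P = r :=
  (hX.integral_comp (f := Nat.cast) (measurable_of_countable _).aestronglyMeasurable).trans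
    (integral_poissonMeasure_natCast r)

lemma HasLaw.integrable_natCast_pow_four_of_poisson (hX : HasLaw X (poissonMeasure r) P) :
    Integrable (fun ω ↦ (X ω : ℝ) ^ 4) P := by
  have h : Integrable (fun k : ℕ ↦ (k : ℝ) ^ 4) (P.map X) := by
    rw [hX.map_eq]
    refine integrable_poissonMeasure_of_le_two_pow (c := 24) fun k ↦ ?_
    rw [Real.norm_of_nonneg (by positivity)]
    exact_mod_cast pow_four_le_two_pow k
  exact h.comp_aemeasurable hX.aemeasurable

lemma HasLaw.integral_natCast_pow_four_le_of_poisson (hX : HasLaw X (poissonMeasure r) P) :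
    ∫ ω, (X ω : ℝ) ^ 4 ∂P ≤ 24 * exp r := by
  rw [← Function.comp_def (fun k : ℕ ↦ (k : ℝ) ^ 4) X,
    hX.integral_comp (measurable_of_countable _).aestronglyMeasurable]
  exact integral_poissonMeasure_le_of_le_two_pow (fun k ↦ by positivity)
    fun k ↦ by exact_mod_cast pow_four_le_two_pow k

end PoissonVariable

end ProbabilityTheory

section PathCount

variable {V : Type*}

def pathFirstEdge (p : V × V × V) : V × V := (p.1, p.2.1)

def pathSecondEdge (p : V × V × V) : V × V := (p.2.1, p.2.2)

def pathEdges [DecidableEq V] (p : V × V × V) : Finset (V × V) :=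
  {pathFirstEdge p, pathSecondEdge p}

-- A triple `(i, k, j)` is the path `i → k → j`, weighted by its endpoints `i` and `j`.
def pathCount [Fintype V] (w a : V → V → ℝ) : ℝ :=
  ∑ p : V × V × V, w p.1 p.2.2 * (a p.1 p.2.1 * a p.2.1 p.2.2)

variable [Fintype V]

lemma pathCount_nonneg {w a : V → V → ℝ} (hw : ∀ i j, 0 ≤ w i j) (ha : ∀ i j, 0 ≤ a i j) :
    0 ≤ pathCount w a :=
  sum_nonneg fun _ _ ↦ mul_nonneg (hw _ _) (mul_nonneg (ha _ _) (ha _ _))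

lemma pathCount_le_pathCount {w w' a : V → V → ℝ} (hw : ∀ i j, w i j ≤ w' i j)
    (ha : ∀ i j, 0 ≤ a i j) : pathCount w a ≤ pathCount w' a :=
  sum_le_sum fun _ _ ↦ mul_le_mul_of_nonneg_right (hw _ _) (mul_nonneg (ha _ _) (ha _ _))

lemma sum_pathCount {ι : Type*} (s : Finset ι) (w : ι → V → V → ℝ) (a : V → V → ℝ) :
    ∑ k ∈ s, pathCount (w k) a = pathCount (fun i j ↦ ∑ k ∈ s, w k i j) a := by
  simp only [pathCount, sum_mul]
  exact sum_comm

lemma pathCount_one (a : V → V → ℝ) :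
    pathCount (fun _ _ ↦ 1) a = ∑ k, (∑ i, a i k) * (∑ j, a k j) := by
  simp only [pathCount, one_mul, sum_mul_sum, Fintype.sum_prod_type]
  exact sum_comm

variable [DecidableEq V]

lemma card_filter_not_disjoint_pathEdges_le (p : V × V × V) :
    #{q | ¬Disjoint (pathEdges p) (pathEdges q)} ≤ 4 * Fintype.card V := by
  let extend : (V × V) × Bool × V → V × V × V := fun ⟨e, b, v⟩ ↦
    if b then (e.1, e.2, v) else (v, e.1, e.2)
  have hsub : ({q | ¬Disjoint (pathEdges p) (pathEdges q)} : Finset (V × V × V)) ⊆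
      (pathEdges p ×ˢ univ).image extend := by
    intro q hq
    obtain ⟨e, hep, heq⟩ := Finset.not_disjoint_iff.1 (mem_filter.1 hq).2
    simp only [pathEdges, mem_insert, mem_singleton] at heq
    rcases heq with rfl | rfl
    · exact mem_image.2 ⟨(pathFirstEdge q, true, q.2.2), by simp [hep], rfl⟩
    · exact mem_image.2 ⟨(pathSecondEdge q, false, q.1), by simp [hep], rfl⟩
  calc _ ≤ #((pathEdges p ×ˢ univ).image extend) := card_le_card hsub
    _ ≤ #(pathEdges p ×ˢ (univ : Finset (Bool × V))) := card_image_le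
    _ ≤ 2 * (2 * Fintype.card V) := by
        rw [card_product, card_univ, Fintype.card_prod, Fintype.card_bool]
        gcongr
        exact card_le_two
    _ = 4 * Fintype.card V := by ring

lemma card_filter_pathFirstEdge_eq_pathSecondEdge_le :
    #{p : V × V × V | pathFirstEdge p = pathSecondEdge p} ≤ Fintype.card V := by
  calc _ ≤ #((univ : Finset V).image fun v ↦ (v, v, v)) := by
        refine card_le_card fun p hp ↦ mem_image.2 ⟨p.1, mem_univ _, ?_⟩
        simp only [pathFirstEdge, pathSecondEdge, mem_filter, Prod.mk.injEq] at hp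
        obtain ⟨-, h1, h2⟩ := hp
        ext <;> simp [h1, h2]
    _ ≤ Fintype.card V := card_image_le

end PathCount

section PoissonModel

variable {Ω : Type*} {mΩ : MeasurableSpace Ω} {P : Measure Ω} {V : Type*}
  {X : V × V → Ω → ℕ} {μ : V × V → ℝ≥0} {C : ℝ≥0} {w : V → V → ℝ}

def pathTerm (w : V → V → ℝ) (X : V × V → Ω → ℕ) (p : V × V × V) (ω : Ω) : ℝ :=
  w p.1 p.2.2 * ((X (pathFirstEdge p) ω : ℝ) * X (pathSecondEdge p) ω)

lemma pathCount_natCast_eq_sum_pathTerm [Fintype V] :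
    (fun ω ↦ pathCount w (fun i j ↦ (X (i, j) ω : ℝ))) = fun ω ↦ ∑ p, pathTerm w X p ω := rfl

lemma pathTerm_nonneg (hw : ∀ i j, w i j ∈ Set.Icc (0 : ℝ) 1) (p : V × V × V) (ω : Ω) :
    0 ≤ pathTerm w X p ω :=
  mul_nonneg (hw _ _).1 (by positivity)

lemma pathTerm_le (hw : ∀ i j, w i j ∈ Set.Icc (0 : ℝ) 1) (p : V × V × V) (ω : Ω) :
    pathTerm w X p ω ≤ (X (pathFirstEdge p) ω : ℝ) * X (pathSecondEdge p) ω :=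
  mul_le_of_le_one_left (by positivity) (hw _ _).2

variable (hX : ∀ e, HasLaw (X e) (poissonMeasure (μ e)) P)
include hX

lemma integrable_sum_natCast_pow_four {ι : Type*} [Fintype ι] (f : ι → V × V) :
    Integrable (fun ω ↦ ∑ i, (X (f i) ω : ℝ) ^ 4) P :=
  integrable_finsetSum _ fun i _ ↦ (hX (f i)).integrable_natCast_pow_four_of_poisson

lemma integral_sum_natCast_pow_four_le {ι : Type*} [Fintype ι] (hC : ∀ e, μ e ≤ C)
    (f : ι → V × V) :
    ∫ ω, ∑ i, (X (f i) ω : ℝ) ^ 4 ∂P ≤ Fintype.card ι * (24 * exp C) := by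
  rw [integral_finsetSum _ fun i _ ↦ (hX (f i)).integrable_natCast_pow_four_of_poisson]
  refine (sum_le_card_nsmul _ _ (24 * exp C) fun i _ ↦ ?_).trans_eq (by simp)
  grw [(hX (f i)).integral_natCast_pow_four_le_of_poisson, hC (f i)]

lemma aestronglyMeasurable_pathTerm (p : V × V × V) : AEStronglyMeasurable (pathTerm w X p) P :=
  (aestronglyMeasurable_const.mul
    ((aestronglyMeasurable_comp_of_nat (hX _).aemeasurable Nat.cast).mul
      (aestronglyMeasurable_comp_of_nat (hX _).aemeasurable Nat.cast)))

lemma memLp_pathTerm (hw : ∀ i j, w i j ∈ Set.Icc (0 : ℝ) 1) (p : V × V × V) :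
    MemLp (pathTerm w X p) 2 P := by
  refine (memLp_two_iff_integrable_sq (aestronglyMeasurable_pathTerm hX p)).2 <|
    (integrable_sum_natCast_pow_four hX ![pathFirstEdge p, pathSecondEdge p]).mono'
      ((aestronglyMeasurable_pathTerm hX p).pow 2) (ae_of_all _ fun ω ↦ ?_)
  set x : ℝ := (X (pathFirstEdge p) ω : ℝ)
  set y : ℝ := (X (pathSecondEdge p) ω : ℝ)
  have hxy : pathTerm w X p ω ^ 2 ≤ (x * y) ^ 2 :=
    pow_le_pow_left₀ (pathTerm_nonneg hw p ω) (pathTerm_le hw p ω) 2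
  rw [Real.norm_of_nonneg (sq_nonneg _), Fin.sum_univ_two]
  simp only [Matrix.cons_val_zero, Matrix.cons_val_one]
  nlinarith [sq_nonneg (x ^ 2 - y ^ 2), sq_nonneg x, sq_nonneg y]

lemma integral_pathTerm_le [IsProbabilityMeasure P] (hC : ∀ e, μ e ≤ C)
    (hw : ∀ i j, w i j ∈ Set.Icc (0 : ℝ) 1) (p : V × V × V) :
    ∫ ω, pathTerm w X p ω ∂P ≤ 24 * exp C := by
  let f := ![pathFirstEdge p, pathSecondEdge p]
  have hpoint : ∀ ω, pathTerm w X p ω ≤ (∑ i, (X (f i) ω : ℝ) ^ 4) / 2 := fun ω ↦ calc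
    _ ≤ (X (pathFirstEdge p) ω : ℝ) * X (pathSecondEdge p) ω := pathTerm_le hw p ω
    _ ≤ _ := natCast_mul_le_sum_pow_four _ _
    _ = _ := by simp [f, Fin.sum_univ_two]
  calc ∫ ω, pathTerm w X p ω ∂P ≤ ∫ ω, (∑ i, (X (f i) ω : ℝ) ^ 4) / 2 ∂P :=
        integral_mono ((memLp_pathTerm hX hw p).integrable one_le_two)
          ((integrable_sum_natCast_pow_four hX f).div_const 2) hpoint
    _ = (∫ ω, ∑ i, (X (f i) ω : ℝ) ^ 4 ∂P) / 2 := integral_div _ _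
    _ ≤ 24 * exp C := by
        grw [integral_sum_natCast_pow_four_le hX hC f]
        simp

lemma integral_pathTerm_mul_le (hC : ∀ e, μ e ≤ C) (hw : ∀ i j, w i j ∈ Set.Icc (0 : ℝ) 1)
    (p q : V × V × V) : ∫ ω, pathTerm w X p ω * pathTerm w X q ω ∂P ≤ 24 * exp C := by
  let f := ![pathFirstEdge p, pathSecondEdge p, pathFirstEdge q, pathSecondEdge q]
  have hpoint : ∀ ω, pathTerm w X p ω * pathTerm w X q ω ≤ (∑ i, (X (f i) ω : ℝ) ^ 4) / 4 :=
      fun ω ↦ calc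
    _ ≤ (X (pathFirstEdge p) ω : ℝ) * X (pathSecondEdge p) ω *
          ((X (pathFirstEdge q) ω : ℝ) * X (pathSecondEdge q) ω) :=
      mul_le_mul (pathTerm_le hw p ω) (pathTerm_le hw q ω) (pathTerm_nonneg hw q ω) (by positivity)
    _ ≤ _ := mul_mul_mul_le_sum_pow_four (by positivity) (by positivity) (by positivity)
      (by positivity)
    _ = _ := by simp [f, Fin.sum_univ_four]
  calc ∫ ω, pathTerm w X p ω * pathTerm w X q ω ∂P
        ≤ ∫ ω, (∑ i, (X (f i) ω : ℝ) ^ 4) / 4 ∂P :=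
        integral_mono ((memLp_pathTerm hX hw p).integrable_mul (memLp_pathTerm hX hw q))
          ((integrable_sum_natCast_pow_four hX f).div_const 4) hpoint
    _ = (∫ ω, ∑ i, (X (f i) ω : ℝ) ^ 4 ∂P) / 4 := integral_div _ _
    _ ≤ 24 * exp C := by
        grw [integral_sum_natCast_pow_four_le hX hC f]
        simp

lemma integral_pathTerm_of_ne (hind : iIndepFun X P) {p : V × V × V}
    (hp : pathFirstEdge p ≠ pathSecondEdge p) :
    ∫ ω, pathTerm w X p ω ∂P = w p.1 p.2.2 * (μ (pathFirstEdge p) * μ (pathSecondEdge p)) := by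
  have hcast : Measurable (Nat.cast : ℕ → ℝ) := measurable_of_countable _
  have hprod := ((hind.indepFun hp).comp hcast hcast).integral_fun_mul_eq_mul_integral
    (aestronglyMeasurable_comp_of_nat (hX _).aemeasurable Nat.cast)
    (aestronglyMeasurable_comp_of_nat (hX _).aemeasurable Nat.cast)
  simp only [Function.comp_apply] at hprod
  unfold pathTerm
  rw [integral_const_mul, hprod, (hX _).integral_natCast_of_poisson_s4,
    (hX _).integral_natCast_of_poisson_s4]

lemma covariance_pathTerm_eq_zero [DecidableEq V] (hind : iIndepFun X P)
    (hw : ∀ i j, w i j ∈ Set.Icc (0 : ℝ) 1) {p q : V × V × V}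
    (hpq : Disjoint (pathEdges p) (pathEdges q)) :
    cov[pathTerm w X p, pathTerm w X q; P] = 0 := by
  have hmem : ∀ p : V × V × V, pathFirstEdge p ∈ pathEdges p ∧ pathSecondEdge p ∈ pathEdges p :=
    fun p ↦ by simp [pathEdges]
  let g : (p : V × V × V) → (pathEdges p → ℕ) → ℝ := fun p v ↦
    w p.1 p.2.2 * ((v ⟨_, (hmem p).1⟩ : ℝ) * v ⟨_, (hmem p).2⟩)
  have hindep := (hind.indepFun_finset₀ _ _ hpq fun e ↦ (hX e).aemeasurable).comp
    (measurable_of_countable (g p)) (measurable_of_countable (g q))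
  exact hindep.covariance_eq_zero (memLp_pathTerm hX hw p) (memLp_pathTerm hX hw q)

lemma covariance_pathTerm_le [IsProbabilityMeasure P] (hC : ∀ e, μ e ≤ C)
    (hw : ∀ i j, w i j ∈ Set.Icc (0 : ℝ) 1) (p q : V × V × V) :
    cov[pathTerm w X p, pathTerm w X q; P] ≤ 24 * exp C := by
  rw [covariance_eq_sub (memLp_pathTerm hX hw p) (memLp_pathTerm hX hw q)]
  have hmeans : 0 ≤ P[pathTerm w X p] * P[pathTerm w X q] :=
    mul_nonneg (integral_nonneg (pathTerm_nonneg hw p)) (integral_nonneg (pathTerm_nonneg hw q))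
  have := integral_pathTerm_mul_le hX hC hw p q
  simp only [Pi.mul_apply]
  linarith

end PoissonModel

section PathCountConcentration

variable {Ω : Type*} {mΩ : MeasurableSpace Ω} {P : Measure Ω} [IsProbabilityMeasure P]
  {V : Type*} [Fintype V] [DecidableEq V]
  {X : V × V → Ω → ℕ} {μ : V × V → ℝ≥0} {C : ℝ≥0} {w : V → V → ℝ}
  (hX : ∀ e, HasLaw (X e) (poissonMeasure (μ e)) P) (hC : ∀ e, μ e ≤ C)
  (hind : iIndepFun X P) (hw : ∀ i j, w i j ∈ Set.Icc (0 : ℝ) 1)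
include hX hC hind hw

lemma variance_pathCount_le :
    Var[fun ω ↦ pathCount w (fun i j ↦ (X (i, j) ω : ℝ)); P] ≤
      4 * (24 * exp C) * Fintype.card V ^ 4 := by
  rw [pathCount_natCast_eq_sum_pathTerm, variance_fun_sum (memLp_pathTerm hX hw)]
  have hrow : ∀ p, ∑ q, cov[pathTerm w X p, pathTerm w X q; P] ≤
      4 * Fintype.card V * (24 * exp C) := fun p ↦ by
    rw [← sum_filter_of_ne (p := fun q ↦ ¬Disjoint (pathEdges p) (pathEdges q))
      fun q _ hne hdisj ↦ hne (covariance_pathTerm_eq_zero hX hind hw hdisj)]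
    refine (sum_le_card_nsmul _ _ _ fun q _ ↦ covariance_pathTerm_le hX hC hw p q).trans ?_
    rw [nsmul_eq_mul]
    gcongr
    exact_mod_cast card_filter_not_disjoint_pathEdges_le p
  calc _ ≤ ∑ _p : V × V × V, 4 * Fintype.card V * (24 * exp C) := sum_le_sum fun p _ ↦ hrow p
    _ = _ := by simp [Fintype.card_prod]; ring

lemma abs_integral_pathCount_sub_le :
    |∫ ω, pathCount w (fun i j ↦ (X (i, j) ω : ℝ)) ∂P - pathCount w (fun i j ↦ (μ (i, j) : ℝ))| ≤
      Fintype.card V * (24 * exp C + C ^ 2) := by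
  rw [pathCount_natCast_eq_sum_pathTerm,
    integral_finsetSum _ fun p _ ↦ (memLp_pathTerm hX hw p).integrable one_le_two, pathCount,
    ← sum_sub_distrib]
  have hterm : ∀ p : V × V × V, |∫ ω, pathTerm w X p ω ∂P -
      w p.1 p.2.2 * ((μ (p.1, p.2.1) : ℝ) * μ (p.2.1, p.2.2))| ≤ 24 * exp C + C ^ 2 := fun p ↦ by
    have hμμ : (μ (p.1, p.2.1) : ℝ) * μ (p.2.1, p.2.2) ≤ C ^ 2 := by
      rw [sq]
      exact mul_le_mul (hC _) (hC _) (by positivity) C.coe_nonneg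
    refine abs_sub_le_of_nonneg_of_le (integral_nonneg (pathTerm_nonneg hw p))
      ((integral_pathTerm_le hX hC hw p).trans (by linarith [sq_nonneg (C : ℝ)]))
      (mul_nonneg (hw _ _).1 (by positivity)) ?_
    grw [mul_le_of_le_one_left (by positivity) (hw _ _).2, hμμ]
    linarith [exp_pos C]
  calc _ ≤ ∑ p, |∫ ω, pathTerm w X p ω ∂P -
        w p.1 p.2.2 * ((μ (p.1, p.2.1) : ℝ) * μ (p.2.1, p.2.2))| := abs_sum_le_sum_abs _ _
    _ = ∑ p with pathFirstEdge p = pathSecondEdge p, |∫ ω, pathTerm w X p ω ∂P -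
        w p.1 p.2.2 * ((μ (p.1, p.2.1) : ℝ) * μ (p.2.1, p.2.2))| := by
      refine (sum_filter_of_ne fun p _ hne ↦ ?_).symm
      by_contra hp
      simp [integral_pathTerm_of_ne hX hind hp, pathFirstEdge, pathSecondEdge] at hne
    _ ≤ _ := by
      refine (sum_le_card_nsmul _ _ _ fun p _ ↦ hterm p).trans ?_
      rw [nsmul_eq_mul]
      gcongr
      exact_mod_cast card_filter_pathFirstEdge_eq_pathSecondEdge_le

lemma measure_le_abs_pathCount_sub_le {t : ℝ} (ht : 0 < t)
    (hbias : 2 * (Fintype.card V * (24 * exp C + C ^ 2)) ≤ t) :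
    P {ω | t ≤ |pathCount w (fun i j ↦ (X (i, j) ω : ℝ)) - pathCount w (fun i j ↦ (μ (i, j) : ℝ))|}
      ≤ ENNReal.ofReal (16 * (24 * exp C) * Fintype.card V ^ 4 / t ^ 2) := by
  have hvar := variance_pathCount_le hX hC hind hw
  set S := fun ω ↦ pathCount w (fun i j ↦ (X (i, j) ω : ℝ))
  have hS : MemLp S 2 P := memLp_finsetSum _ fun p _ ↦ memLp_pathTerm hX hw p
  have hmean := abs_integral_pathCount_sub_le hX hC hind hw
  calc _ ≤ P {ω | t / 2 ≤ |S ω - P[S]|} := measure_mono fun ω hω ↦ by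
        have := abs_sub_le (S ω) P[S] (pathCount w (fun i j ↦ (μ (i, j) : ℝ)))
        simp only [Set.mem_ofPred_eq] at hω ⊢
        linarith
    _ ≤ ENNReal.ofReal (Var[S; P] / (t / 2) ^ 2) := meas_ge_le_variance_div_sq hS (half_pos ht)
    _ ≤ _ := by
        refine ENNReal.ofReal_le_ofReal ?_
        rw [div_pow, div_div_eq_mul_div]
        exact div_le_div_of_nonneg_right (by linarith) (by positivity)

end PathCountConcentration

section Assortativity

variable {G : Type*} [Fintype G]

def IsMixingMatrix (e : G → G → ℝ) : Prop :=
  (∀ r s, 0 ≤ e r s) ∧ ∑ r, ∑ s, e r s ≤ 1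

def marginalProduct (e : G → G → ℝ) : ℝ :=
  ∑ r, (∑ s, e r s) * (∑ s, e s r)

noncomputable def assortativity (e : G → G → ℝ) : ℝ :=
  ((∑ r, e r r) - marginalProduct e) / (1 - marginalProduct e)

namespace IsMixingMatrix

variable {e : G → G → ℝ} (he : IsMixingMatrix e)
include he

lemma rowSum_mem_Icc (r : G) : ∑ s, e r s ∈ Set.Icc (0 : ℝ) 1 :=
  ⟨sum_nonneg fun s _ ↦ he.1 r s,
    (single_le_sum (f := fun r ↦ ∑ s, e r s) (fun r _ ↦ sum_nonneg fun s _ ↦ he.1 r s)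
      (mem_univ r)).trans he.2⟩

lemma colSum_mem_Icc (r : G) : ∑ s, e s r ∈ Set.Icc (0 : ℝ) 1 :=
  rowSum_mem_Icc (e := fun r s ↦ e s r) ⟨fun r s ↦ he.1 s r, sum_comm.trans_le he.2⟩ r

lemma trace_mem_Icc : ∑ r, e r r ∈ Set.Icc (0 : ℝ) 1 :=
  ⟨sum_nonneg fun r _ ↦ he.1 r r, (sum_le_sum fun r _ ↦
    single_le_sum (f := e r) (fun s _ ↦ he.1 r s) (mem_univ r)).trans he.2⟩

lemma marginalProduct_mem_Icc : marginalProduct e ∈ Set.Icc (0 : ℝ) 1 := by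
  refine ⟨sum_nonneg fun r _ ↦ mul_nonneg (he.rowSum_mem_Icc r).1 (he.colSum_mem_Icc r).1, ?_⟩
  calc marginalProduct e ≤ ∑ r, ∑ s, e r s := sum_le_sum fun r _ ↦
        mul_le_of_le_one_right (he.rowSum_mem_Icc r).1 (he.colSum_mem_Icc r).2
    _ ≤ 1 := he.2

end IsMixingMatrix

lemma abs_marginalProduct_sub_le {p q : G → G → ℝ} (hp : IsMixingMatrix p)
    (hq : IsMixingMatrix q) {η : ℝ} (hpq : ∀ r s, |p r s - q r s| ≤ η) :
    |marginalProduct p - marginalProduct q| ≤ 2 * Fintype.card G ^ 2 * η := by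
  set m : ℝ := (Fintype.card G : ℝ)
  have hrow r : |∑ s, p r s - ∑ s, q r s| ≤ m * η := abs_sum_sub_sum_le (hpq r)
  have hcol r : |∑ s, p s r - ∑ s, q s r| ≤ m * η := abs_sum_sub_sum_le fun s ↦ hpq s r
  have hterm r : |(∑ s, p r s) * (∑ s, p s r) - (∑ s, q r s) * (∑ s, q s r)| ≤ 2 * m * η := by
    have hpc := hp.colSum_mem_Icc r
    have hqr := hq.rowSum_mem_Icc r
    calc _ = |(∑ s, p r s - ∑ s, q r s) * (∑ s, p s r) +
            (∑ s, q r s) * (∑ s, p s r - ∑ s, q s r)| := by ring_nf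
      _ ≤ m * η * 1 + 1 * (m * η) := by
        refine (abs_add_le _ _).trans (add_le_add ?_ ?_) <;> rw [abs_mul]
        · exact mul_le_mul (hrow r) (by rw [abs_of_nonneg hpc.1]; exact hpc.2) (abs_nonneg _)
            ((abs_nonneg _).trans (hrow r))
        · exact mul_le_mul (by rw [abs_of_nonneg hqr.1]; exact hqr.2) (hcol r) (abs_nonneg _)
            zero_le_one
      _ = 2 * m * η := by ring
  exact (abs_sum_sub_sum_le hterm).trans_eq (by ring)

lemma abs_assortativity_sub_le {p q : G → G → ℝ} (hq : IsMixingMatrix q) {δ τ : ℝ} (hδ : 0 < δ)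
    (hqδ : marginalProduct q ≤ 1 - δ) (htrace : |∑ r, p r r - ∑ r, q r r| ≤ τ)
    (hmarg : |marginalProduct p - marginalProduct q| ≤ 2 * τ) (hτ : τ ≤ δ / 4) :
    |assortativity p - assortativity q| ≤ 10 * τ / δ ^ 2 := by
  obtain ⟨hxq0, hxq1⟩ := hq.trace_mem_Icc
  obtain ⟨hyq0, -⟩ := hq.marginalProduct_mem_Icc
  have hτ0 : 0 ≤ τ := (abs_nonneg _).trans htrace
  have hδ1 : δ ≤ 1 := by linarith
  have hdq : δ ≤ 1 - marginalProduct q := by linarith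
  have hdp : δ / 2 ≤ 1 - marginalProduct p := by linarith [abs_le.1 hmarg]
  have hcd : |(∑ r, q r r - marginalProduct q) / (1 - marginalProduct q)| ≤ 1 / δ := by
    rw [abs_div, abs_of_pos (by linarith : 0 < 1 - marginalProduct q)]
    exact div_le_div₀ zero_le_one (abs_le.2 ⟨by linarith, by linarith⟩) hδ hdq
  have hac : |(∑ r, p r r - marginalProduct p) - (∑ r, q r r - marginalProduct q)| ≤ 3 * τ := by
    calc _ = |(∑ r, p r r - ∑ r, q r r) - (marginalProduct p - marginalProduct q)| := by ring_nf
      _ ≤ τ + 2 * τ := (abs_sub _ _).trans (add_le_add htrace hmarg)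
      _ = 3 * τ := by ring
  have hbd : |(1 - marginalProduct p) - (1 - marginalProduct q)| ≤ 2 * τ := by
    rw [show (1 - marginalProduct p) - (1 - marginalProduct q) =
      -(marginalProduct p - marginalProduct q) by ring, abs_neg]
    exact hmarg
  calc |assortativity p - assortativity q|
      ≤ (3 * τ + 1 / δ * (2 * τ)) / (1 - marginalProduct p) :=
        (abs_div_sub_div_le (by linarith) (by linarith)).trans <| div_le_div_of_nonneg_right
          (add_le_add hac (mul_le_mul hcd hbd (abs_nonneg _) (by positivity))) (by linarith)
    _ ≤ (3 * τ / δ + 2 * τ / δ) / (δ / 2) := by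
        gcongr
        · exact le_div_self (by positivity) hδ hδ1
        · exact le_of_eq (by ring)
    _ = 10 * τ / δ ^ 2 := by field_simp; ring

lemma exists_pos_abs_assortativity_sub_lt {δ ε : ℝ} (hδ : 0 < δ) (hε : 0 < ε) :
    ∃ η > 0, ∀ p q : G → G → ℝ, IsMixingMatrix p → IsMixingMatrix q →
      marginalProduct q ≤ 1 - δ → (∀ r s, |p r s - q r s| < η) →
      |assortativity p - assortativity q| < ε := by
  set m : ℝ := (Fintype.card G : ℝ)
  set τ := min (δ / 4) (ε * δ ^ 2 / 20)
  have hτ : 0 < τ := lt_min (by positivity) (by positivity)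
  refine ⟨τ / (m ^ 2 + 1), by positivity, fun p q hp hq hqδ hpq ↦ ?_⟩
  have hpq' r s : |p r s - q r s| ≤ τ / (m ^ 2 + 1) := (hpq r s).le
  have htrace : |∑ r, p r r - ∑ r, q r r| ≤ τ := (abs_sum_sub_sum_le fun r ↦ hpq' r r).trans <| by
    rw [mul_div_assoc']
    exact div_le_of_le_mul₀ (by positivity) hτ.le (by nlinarith [sq_nonneg (m - 1)])
  have hmarg : |marginalProduct p - marginalProduct q| ≤ 2 * τ :=
    (abs_marginalProduct_sub_le hp hq hpq').trans <| by
      rw [mul_div_assoc']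
      exact div_le_of_le_mul₀ (by positivity) (by positivity) (by nlinarith)
  calc |assortativity p - assortativity q| ≤ 10 * τ / δ ^ 2 :=
        abs_assortativity_sub_le hq hδ hqδ htrace hmarg (min_le_left _ _)
    _ < ε := by
        rw [div_lt_iff₀ (by positivity)]
        nlinarith [min_le_right (δ / 4) (ε * δ ^ 2 / 20), mul_pos hε (pow_pos hδ 2)]

end Assortativity

section GroupFractions

variable {G : Type*} [DecidableEq G] {V : Type*}

def groupWeight (g : V → G) (r s : G) (i j : V) : ℝ :=
  (if g i = r then 1 else 0) * (if g j = s then 1 else 0)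

lemma groupWeight_mem_Icc (g : V → G) (r s : G) (i j : V) :
    groupWeight g r s i j ∈ Set.Icc (0 : ℝ) 1 := by
  unfold groupWeight
  split_ifs <;> norm_num

lemma sum_sum_groupWeight [Fintype G] (g : V → G) (i j : V) :
    ∑ r, ∑ s, groupWeight g r s i j = 1 := by
  simp [groupWeight]

lemma pathFrac2_eq_div [Fintype G] {n : ℕ} (g : Fin n → G) (a : Fin n → Fin n → ℝ) (r s : G) :
    pathFrac2 g a r s = pathCount (groupWeight g r s) a / pathCount (fun _ _ ↦ 1) a := by
  simp only [pathFrac2, pathCount, groupWeight, one_mul, Fintype.sum_prod_type]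
  congr 1 <;> exact sum_congr rfl fun i _ ↦ sum_comm

lemma isMixingMatrix_pathFrac2 [Fintype G] {n : ℕ} (g : Fin n → G) {a : Fin n → Fin n → ℝ}
    (ha : ∀ i j, 0 ≤ a i j) : IsMixingMatrix (pathFrac2 g a) := by
  have hW r s i j := (groupWeight_mem_Icc g r s i j).1
  refine ⟨fun r s ↦ ?_, ?_⟩
  · rw [pathFrac2_eq_div]
    exact div_nonneg (pathCount_nonneg (hW r s) ha) (pathCount_nonneg (fun _ _ ↦ zero_le_one) ha)
  · simp only [pathFrac2_eq_div, ← sum_div, sum_pathCount, sum_sum_groupWeight]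
    exact div_self_le_one _

lemma assort2_eq_assortativity [Fintype G] {n : ℕ} (g : Fin n → G) (a : Fin n → Fin n → ℝ) :
    assort2 g a = assortativity (pathFrac2 g a) :=
  rfl

end GroupFractions

section Asymptotics

variable {Ω : Type*} {mΩ : MeasurableSpace Ω} {P : Measure Ω} [IsProbabilityMeasure P]
  {X : (n : ℕ) → Fin n × Fin n → Ω → ℕ} {μ : (n : ℕ) → Fin n × Fin n → ℝ≥0} {C : ℝ≥0}
  (hX : ∀ n e, HasLaw (X n e) (poissonMeasure (μ n e)) P) (hC : ∀ n e, μ n e ≤ C)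
  (hind : ∀ n, iIndepFun (X n) P)
include hX hC hind

lemma tendsto_measure_le_abs_pathCount_sub {w : (n : ℕ) → Fin n → Fin n → ℝ}
    (hw : ∀ n i j, w n i j ∈ Set.Icc (0 : ℝ) 1) {θ : ℝ} (hθ : 0 < θ) :
    Tendsto (fun n : ℕ ↦ P {ω | θ * n ^ 3 ≤ |pathCount (w n) (fun i j ↦ (X n (i, j) ω : ℝ)) -
      pathCount (w n) (fun i j ↦ (μ n (i, j) : ℝ))|}) atTop (𝓝 0) := by
  have hsq := (tendsto_pow_atTop two_ne_zero).comp (tendsto_natCast_atTop_atTop (R := ℝ))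
  have hbound : Tendsto (fun n : ℕ ↦ ENNReal.ofReal (16 * (24 * exp C) / θ ^ 2 / n ^ 2))
      atTop (𝓝 0) := by
    simpa using ENNReal.tendsto_ofReal (tendsto_const_nhds.div_atTop hsq)
  refine tendsto_of_tendsto_of_tendsto_of_le_of_le' tendsto_const_nhds hbound
    (Eventually.of_forall fun _ ↦ zero_le) ?_
  filter_upwards [eventually_ge_atTop 1, hsq.eventually_ge_atTop (2 * (24 * exp C + C ^ 2) / θ)]
    with n hn1 hn2
  have hn : (0 : ℝ) < n := by exact_mod_cast hn1
  simp only [Function.comp_apply, div_le_iff₀ hθ] at hn2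
  refine (measure_le_abs_pathCount_sub_le (hX n) (hC n) (hind n) (hw n) (by positivity)
    ?_).trans_eq ?_
  · rw [Fintype.card_fin]
    nlinarith
  · rw [Fintype.card_fin]
    congr 1
    field_simp

lemma tendsto_measure_le_abs_pathFrac2_sub {G : Type*} [Fintype G] [DecidableEq G]
    (g : (n : ℕ) → Fin n → G) {c : ℝ} (hc : 0 < c)
    (hdense : ∀ᶠ n : ℕ in atTop, c < pathCount (fun _ _ ↦ 1) (fun i j ↦ (μ n (i, j) : ℝ)) / n ^ 3)
    (r s : G) {η : ℝ} (hη : 0 < η) :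
    Tendsto (fun n ↦ P {ω | η ≤ |pathFrac2 (g n) (fun i j ↦ (X n (i, j) ω : ℝ)) r s -
      pathFrac2 (g n) (fun i j ↦ (μ n (i, j) : ℝ)) r s|}) atTop (𝓝 0) := by
  set θ := min (c / 2) (η * c / 4)
  have hθ : 0 < θ := lt_min (by positivity) (by positivity)
  -- the weights of the numerator (`true`) and of the denominator (`false`) of `pathFrac2`
  let W : Bool → (n : ℕ) → Fin n → Fin n → ℝ := fun b n ↦
    if b then groupWeight (g n) r s else fun _ _ ↦ 1
  have hW b n i j : W b n i j ∈ Set.Icc (0 : ℝ) 1 := by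
    cases b
    · simp [W]
    · exact groupWeight_mem_Icc _ _ _ _ _
  refine tendsto_measure_of_subset_iUnion
    (fun b ↦ tendsto_measure_le_abs_pathCount_sub hX hC hind (hW b) hθ) ?_
  filter_upwards [hdense, eventually_ge_atTop 1] with n hn hn1 ω hω
  by_contra hω'
  simp only [Set.mem_iUnion, Set.mem_ofPred_eq, not_exists, not_le, Bool.forall_bool, W,
    Bool.false_eq_true, if_false, if_true] at hω'
  obtain ⟨hone, hgroup⟩ := hω'
  have hn3 : (0 : ℝ) < n ^ 3 := by positivity
  rw [lt_div_iff₀ hn3] at hn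
  rw [Set.mem_ofPred_eq, pathFrac2_eq_div, pathFrac2_eq_div] at hω
  have hμ : ∀ i j, (0 : ℝ) ≤ μ n (i, j) := fun _ _ ↦ NNReal.coe_nonneg _
  have hclose := abs_div_sub_div_lt (by positivity) hn
    (pathCount_nonneg (fun i j ↦ (groupWeight_mem_Icc _ r s i j).1) hμ)
    (pathCount_le_pathCount (fun i j ↦ (groupWeight_mem_Icc _ r s i j).2) hμ) hgroup hone
    (by rw [mul_div_right_comm]; gcongr; exact min_le_left _ _)
  have hη' : 4 * (θ * n ^ 3) / (c * n ^ 3) ≤ η := by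
    rw [div_le_iff₀ (by positivity)]
    nlinarith [min_le_right (c / 2) (η * c / 4)]
  linarith

end Asymptotics

/-- Proposition 3 of the paper: under the heterogeneous Poisson model
with uniformly bounded means, a density condition, and a nondegeneracy condition on the
model marginals, the sampled assortativity on paths of length 2 converges in probability
to the model assortativity on paths of length 2. -/
theorem assort2_consistent
    {Ω : Type*} [MeasureSpace Ω] [IsProbabilityMeasure (ℙ : Measure Ω)]
    {G : Type*} [Fintype G] [DecidableEq G]
    (g : (n : ℕ) → Fin n → G)
    (A : (n : ℕ) → Fin n → Fin n → Ω → ℕ)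
    (μ : (n : ℕ) → Fin n → Fin n → ℝ≥0) (C : ℝ≥0)
    (hindep : ∀ n, iIndepFun
      (fun p : Fin n × Fin n => A n p.1 p.2) ℙ)
    (hdist : ∀ n (i j : Fin n), Measure.map (A n i j) ℙ = poissonMeasure (μ n i j))
    (hbound : ∀ n (i j : Fin n), μ n i j ≤ C)
    (hdense : 0 < Filter.liminf
      (fun n : ℕ =>
        (∑ k : Fin n, (∑ i : Fin n, (μ n i k : ℝ)) * (∑ j : Fin n, (μ n k j : ℝ)))
          / (n : ℝ) ^ 3) atTop)
    (hnondeg : ∃ δ > (0 : ℝ), ∀ n : ℕ,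
      ∑ r : G, (∑ s : G, pathFrac2 (g n) (fun i j => (μ n i j : ℝ)) r s)
          * (∑ s : G, pathFrac2 (g n) (fun i j => (μ n i j : ℝ)) s r) ≤ 1 - δ) :
    ∀ ε > 0, Tendsto
      (fun n : ℕ => ℙ {ω | ε ≤
        |assort2 (g n) (fun i j => (A n i j ω : ℝ))
          - assort2 (g n) (fun i j => (μ n i j : ℝ))|})
      atTop (nhds 0) := by
  intro ε hε
  obtain ⟨δ, hδ, hmarg⟩ := hnondeg
  obtain ⟨η, hη, hstable⟩ := exists_pos_abs_assortativity_sub_lt (G := G) hδ hε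
  have hlaw n (e : Fin n × Fin n) : HasLaw (A n e.1 e.2) (poissonMeasure (μ n e.1 e.2)) ℙ :=
    ⟨.of_map_ne_zero (by rw [hdist]; exact IsProbabilityMeasure.ne_zero _), hdist n e.1 e.2⟩
  simp only [← pathCount_one] at hdense
  have hdense' := eventually_lt_of_lt_liminf (half_lt_self hdense)
    ⟨0, eventually_map.2 (Eventually.of_forall fun n ↦ div_nonneg
      (pathCount_nonneg (fun _ _ ↦ zero_le_one) fun _ _ ↦ NNReal.coe_nonneg _) (by positivity))⟩
  refine tendsto_measure_of_subset_iUnion (fun rs : G × G ↦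
    tendsto_measure_le_abs_pathFrac2_sub hlaw (fun n e ↦ hbound n e.1 e.2) hindep g
      (half_pos hdense) hdense' rs.1 rs.2 hη) (Eventually.of_forall fun n ω hω ↦ ?_)
  rw [Set.mem_ofPred_eq, assort2_eq_assortativity, assort2_eq_assortativity] at hω
  by_contra hfar
  simp only [Set.mem_iUnion, Set.mem_ofPred_eq, not_exists, not_le] at hfar
  exact (not_lt.2 hω) (hstable _ _ (isMixingMatrix_pathFrac2 _ fun _ _ ↦ Nat.cast_nonneg _)
    (isMixingMatrix_pathFrac2 _ fun _ _ ↦ NNReal.coe_nonneg _) (hmarg n) fun r s ↦ hfar (r, s))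
end

section
/- Let N be a finite set with group assignment g : N → G (G finite), and let (θ_i^o, θ_i^i)_{i∈N} and (ω_{rs})_{r,s∈G} be positive reals with Σ_{i : g i = r} θ_i^o = 1 and Σ_{i : g i = r} θ_i^i = 1 for every r ∈ G. Let A be a random adjacency matrix with mutually independent Poisson entries A i j of mean θ_i^o θ_j^i ω_{g i, g j}, and let λ̂ = Σ_{i∈N, s∈G} [ d_{i,s}^o log d_{i,s}^o + d_{i,s}^i log d_{i,s}^i ] − Σ_{i∈N} [ d_i^o log d_i^o + d_i^i log d_i^i ] − Σ_{r,s∈G} 2 m_{rs} log m_{rs} + Σ_{r∈G} [ d_r^o log d_r^o + d_r^i log d_r^i ], computed from the random matrix A with the convention 0 log 0 = 0. Then E[λ̂] = Σ_{i∈N,s∈G} [ f(θ_i^o ω_{g i, s}) + f(θ_i^i ω_{s, g i}) ] − Σ_{i∈N} [ f(θ_i^o Σ_{s} ω_{g i, s}) + f(θ_i^i Σ_{s} ω_{s, g i}) ] − Σ_{r,s∈G} 2 f(ω_{rs}) + Σ_{r∈G} [ f(Σ_{s} ω_{rs}) + f(Σ_{s} ω_{sr}) ], where f(μ) = E[X log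 X] for X ~ Poisson(μ). -/
open MeasureTheory ProbabilityTheory Filter
open scoped ProbabilityTheory NNReal

/-- `x log x`, extended by `0 log 0 = 0` (note `Real.log 0 = 0`). -/
noncomputable def xlog (x : ℝ) : ℝ := x * Real.log x

/-- `f(μ) = E[X log X]` for `X ~ Poisson(μ)`. -/
noncomputable def poissonXLogX (μ : ℝ≥0) : ℝ :=
  ∫ k : ℕ, xlog (k : ℝ) ∂(poissonMeasure μ)

/-- Out-degree of node `i` to group `s`: `d_{i,s}^o = ∑_{j : g j = s} A i j`. -/
def dOut {N G : Type*} [Fintype N] [DecidableEq G] (g : N → G) (a : N → N → ℕ)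
    (i : N) (s : G) : ℕ := ∑ j ∈ Finset.univ.filter (fun j => g j = s), a i j

/-- In-degree of node `i` from group `s`: `d_{i,s}^i = ∑_{j : g j = s} A j i`. -/
def dIn {N G : Type*} [Fintype N] [DecidableEq G] (g : N → G) (a : N → N → ℕ)
    (i : N) (s : G) : ℕ := ∑ j ∈ Finset.univ.filter (fun j => g j = s), a j i

/-- Total out-degree of node `i`: `d_i^o = ∑_j A i j`. -/
def dTotOut {N : Type*} [Fintype N] (a : N → N → ℕ) (i : N) : ℕ := ∑ j : N, a i j

/-- Total in-degree of node `i`: `d_i^i = ∑_j A j i`. -/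
def dTotIn {N : Type*} [Fintype N] (a : N → N → ℕ) (i : N) : ℕ := ∑ j : N, a j i

/-- Total out-degree of group `r`: `d_r^o = ∑_{i : g i = r} d_i^o`. -/
def dGrpOut {N G : Type*} [Fintype N] [DecidableEq G] (g : N → G) (a : N → N → ℕ)
    (r : G) : ℕ := ∑ i ∈ Finset.univ.filter (fun i => g i = r), dTotOut a i

/-- Total in-degree of group `r`: `d_r^i = ∑_{i : g i = r} d_i^i`. -/
def dGrpIn {N G : Type*} [Fintype N] [DecidableEq G] (g : N → G) (a : N → N → ℕ)
    (r : G) : ℕ := ∑ i ∈ Finset.univ.filter (fun i => g i = r), dTotIn a i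

/-- Number of edges from group `r` to group `s`:
`m_{rs} = ∑_{i : g i = r} ∑_{j : g j = s} A i j`. -/
def mEdges {N G : Type*} [Fintype N] [DecidableEq G] (g : N → G) (a : N → N → ℕ)
    (r s : G) : ℕ :=
  ∑ i ∈ Finset.univ.filter (fun i => g i = r),
    ∑ j ∈ Finset.univ.filter (fun j => g j = s), a i j

/-- The log-likelihood-ratio statistic `λ̂` of the mixed-propensity model against DCSBM,
computed from an adjacency matrix `a` (with the convention `0 log 0 = 0`). -/
noncomputable def llrStat {N G : Type*} [Fintype N] [Fintype G] [DecidableEq G]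
    (g : N → G) (a : N → N → ℕ) : ℝ :=
  (∑ i : N, ∑ s : G, (xlog (dOut g a i s : ℝ) + xlog (dIn g a i s : ℝ)))
    - (∑ i : N, (xlog (dTotOut a i : ℝ) + xlog (dTotIn a i : ℝ)))
    - (∑ r : G, ∑ s : G, 2 * xlog (mEdges g a r s : ℝ))
    + (∑ r : G, (xlog (dGrpOut g a r : ℝ) + xlog (dGrpIn g a r : ℝ)))

/-!
Every degree occurring in `λ̂` counts the edges from a node set `S` to a node set `T`, i.e. it is
a sum of independent Poisson entries `A i j` over `S × T`, hence Poisson with mean the matching sum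
of entry means. By linearity, `E[λ̂]` is therefore the same combination of `f` evaluated at these
block means, and the normalisation `∑_{g i = r} θ_i = 1` collapses each block mean to the
corresponding expression in `θ` and `ω`.
-/

open scoped Nat
open Finset

namespace ProbabilityTheory

lemma poissonMeasure_zero : Po(0) = Measure.dirac 0 := by
  ext s hs
  rw [poissonMeasure, Measure.sum_apply _ hs, tsum_eq_single 0]
  · simp
  · intro n hn
    simp [hn]

variable {Ω ι : Type*} {mΩ : MeasurableSpace Ω} {P : Measure Ω}

lemma hasLaw_poissonMeasure_of_map_eq {X : Ω → ℕ} {r : ℝ≥0} (h : P.map X = Po(r)) :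
    HasLaw X Po(r) P where
  aemeasurable := .of_map_ne_zero (h ▸ IsProbabilityMeasure.ne_zero _)
  map_eq := h

lemma iIndepFun.hasLaw_sum_poissonMeasure [IsProbabilityMeasure P] {X : ι → Ω → ℕ}
    {r : ι → ℝ≥0} (hindep : iIndepFun X P) (hX : ∀ i, HasLaw (X i) Po(r i) P) (s : Finset ι) :
    HasLaw (∑ i ∈ s, X i) Po(∑ i ∈ s, r i) P := by
  classical
  induction s using Finset.induction_on with
  | empty =>
    rw [sum_empty, sum_empty, poissonMeasure_zero]
    exact ⟨aemeasurable_const, by simp [Pi.zero_def]⟩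
  | insert i s hi ih =>
    rw [sum_insert hi, sum_insert hi, add_comm, add_comm (r i)]
    exact (hindep.indepFun_finsetSum_of_notMem₀ (fun j => (hX j).aemeasurable) hi)
      |>.hasLaw_add_poissonMeasure ih (hX i)

end ProbabilityTheory

lemma norm_xlog_natCast_le (n : ℕ) : ‖xlog n‖ ≤ 4 ^ n := by
  have hn : (n : ℝ) ≤ 2 ^ n := by exact_mod_cast Nat.lt_two_pow_self.le
  have hlog : 0 ≤ Real.log n := Real.log_natCast_nonneg n
  rw [xlog, Real.norm_of_nonneg (by positivity), show (4 : ℝ) ^ n = 2 ^ n * 2 ^ n by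
    rw [← mul_pow]; norm_num]
  exact mul_le_mul hn ((Real.log_le_self (by positivity)).trans hn) hlog (by positivity)

lemma integrable_xlog_poissonMeasure (r : ℝ≥0) : Integrable (fun n : ℕ => xlog n) Po(r) := by
  rw [integrable_poissonMeasure_iff]
  refine Summable.of_nonneg_of_le (fun n => by positivity) (fun n => ?_)
    ((Real.summable_pow_div_factorial (4 * r)).mul_left (Real.exp (-r)))
  calc Real.exp (-r) * r ^ n / n ! * ‖xlog n‖ ≤ Real.exp (-r) * r ^ n / n ! * 4 ^ n := by
        gcongr; exact norm_xlog_natCast_le n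
    _ = Real.exp (-r) * ((4 * r) ^ n / n !) := by ring

namespace ProbabilityTheory.HasLaw

variable {Ω : Type*} {mΩ : MeasurableSpace Ω} {P : Measure Ω} {X : Ω → ℕ} {r : ℝ≥0}

lemma integrable_xlog (hX : HasLaw X Po(r) P) : Integrable (fun ω => xlog (X ω)) P :=
  (integrable_map_measure (g := fun n : ℕ => xlog n) .of_discrete hX.aemeasurable).1
    (hX.map_eq ▸ integrable_xlog_poissonMeasure r)

lemma integral_xlog (hX : HasLaw X Po(r) P) : ∫ ω, xlog (X ω) ∂P = poissonXLogX r :=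
  hX.integral_comp (f := fun n : ℕ => xlog n) .of_discrete

end ProbabilityTheory.HasLaw

section Blocks

variable {N : Type*}

def blockSum {M : Type*} [AddCommMonoid M] (a : N → N → M) (S T : Finset N) : M :=
  ∑ i ∈ S, ∑ j ∈ T, a i j

lemma hasLaw_blockSum_poissonMeasure {Ω : Type*} {mΩ : MeasurableSpace Ω} {P : Measure Ω}
    [IsProbabilityMeasure P] {A : N → N → Ω → ℕ} {μ : N → N → ℝ≥0}
    (hindep : iIndepFun (fun p : N × N => A p.1 p.2) P) (hA : ∀ i j, HasLaw (A i j) Po(μ i j) P)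
    (S T : Finset N) :
    HasLaw (fun x => blockSum (fun i j => A i j x) S T) Po(blockSum μ S T) P := by
  convert hindep.hasLaw_sum_poissonMeasure (fun p => hA p.1 p.2) (S ×ˢ T) using 1
  · ext x
    simp only [blockSum, sum_product, Finset.sum_apply]
  · simp only [blockSum, sum_product]

variable {G : Type*} [Fintype N] [DecidableEq G]

/-- The shape of `λ̂`, with the term of the edge count from `S` to `T` replaced by `v S T`
(e.g. `v {i} {j | g j = s}` in place of `xlog d_{i,s}^o`). -/
def llrOfBlocks [Fintype G] (g : N → G) (v : Finset N → Finset N → ℝ) : ℝ :=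
  (∑ i, ∑ s, (v {i} {j | g j = s} + v {j | g j = s} {i}))
    - (∑ i, (v {i} univ + v univ {i}))
    - (∑ r, ∑ s, 2 * v {i | g i = r} {j | g j = s})
    + (∑ r, (v {i | g i = r} univ + v univ {i | g i = r}))

lemma llrStat_eq_llrOfBlocks [Fintype G] (g : N → G) (a : N → N → ℕ) :
    llrStat g a = llrOfBlocks g fun S T => xlog ((blockSum a S T : ℕ) : ℝ) := by
  simp only [llrStat, llrOfBlocks, blockSum, dOut, dIn, dTotOut, dTotIn, mEdges, dGrpOut, dGrpIn,
    sum_singleton, sum_comm (s := univ) (t := ({i | g i = _} : Finset N))]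

lemma integral_llrOfBlocks [Fintype G] {Ω : Type*} {mΩ : MeasurableSpace Ω} {P : Measure Ω}
    (g : N → G) {Y : Finset N → Finset N → Ω → ℝ} (hY : ∀ S T, Integrable (Y S T) P) :
    ∫ x, llrOfBlocks g (fun S T => Y S T x) ∂P = llrOfBlocks g fun S T => ∫ x, Y S T x ∂P := by
  simp (disch := fun_prop) only [llrOfBlocks, integral_add, integral_sub, integral_finsetSum,
    integral_const_mul]

lemma sum_fiber_mul_comp {g : N → G} {θ : N → ℝ≥0} (hθ : ∀ r, ∑ i ∈ {i | g i = r}, θ i = 1)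
    (c : G → ℝ≥0) (r : G) : ∑ i ∈ {i | g i = r}, θ i * c (g i) = c r := by
  rw [sum_congr rfl fun i hi => by rw [(mem_filter.1 hi).2], ← sum_mul, hθ, one_mul]

lemma sum_mul_comp [Fintype G] {g : N → G} {θ : N → ℝ≥0} (hθ : ∀ r, ∑ i ∈ {i | g i = r}, θ i = 1)
    (c : G → ℝ≥0) : ∑ i, θ i * c (g i) = ∑ r, c r := by
  rw [← sum_fiberwise univ g]
  exact sum_congr rfl fun r _ => sum_fiber_mul_comp hθ c r

lemma llrOfBlocks_dcsbm [Fintype G] {g : N → G} {θo θi : N → ℝ≥0} {ω : G → G → ℝ≥0}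
    (hconso : ∀ r, ∑ i ∈ {i | g i = r}, θo i = 1) (hconsi : ∀ r, ∑ i ∈ {i | g i = r}, θi i = 1)
    (f : ℝ≥0 → ℝ) :
    llrOfBlocks g (fun S T => f (blockSum (fun i j => θo i * θi j * ω (g i) (g j)) S T))
      = (∑ i : N, ∑ s : G,
            (f (θo i * ω (g i) s) + f (θi i * ω s (g i))))
        - (∑ i : N,
            (f (θo i * ∑ s : G, ω (g i) s)
              + f (θi i * ∑ s : G, ω s (g i))))
        - (∑ r : G, ∑ s : G, 2 * f (ω r s))
        + (∑ r : G,
            (f (∑ s : G, ω r s) + f (∑ s : G, ω s r))) := by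
  set μ : N → N → ℝ≥0 := fun i j => θo i * θi j * ω (g i) (g j)
  have hrow (S T : Finset N) :
      blockSum μ S T = ∑ i ∈ S, θo i * ∑ j ∈ T, θi j * ω (g i) (g j) := by
    simp only [μ, blockSum, mul_assoc, mul_sum]
  have hcol (i : N) (S : Finset N) :
      blockSum μ S {i} = θi i * ∑ j ∈ S, θo j * ω (g j) (g i) := by
    simp only [μ, blockSum, sum_singleton, mul_sum]
    exact sum_congr rfl fun j _ => by ring
  have hrow_fiber (S : Finset N) (s : G) : blockSum μ S {j | g j = s} = ∑ i ∈ S, θo i * ω (g i) s := by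
    rw [hrow]
    exact sum_congr rfl fun i _ => congrArg _ (sum_fiber_mul_comp hconsi (ω (g i)) s)
  have hrow_univ (S : Finset N) : blockSum μ S univ = ∑ i ∈ S, θo i * ∑ s, ω (g i) s := by
    rw [hrow]
    exact sum_congr rfl fun i _ => congrArg _ (sum_mul_comp hconsi (ω (g i)))
  have hdOut (i : N) (s : G) : blockSum μ {i} {j | g j = s} = θo i * ω (g i) s := by
    rw [hrow_fiber, sum_singleton]
  have hdTotOut (i : N) : blockSum μ {i} univ = θo i * ∑ s, ω (g i) s := by
    rw [hrow_univ, sum_singleton]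
  have hdIn (i : N) (s : G) : blockSum μ {j | g j = s} {i} = θi i * ω s (g i) := by
    rw [hcol, sum_fiber_mul_comp hconso (fun r => ω r (g i))]
  have hdTotIn (i : N) : blockSum μ univ {i} = θi i * ∑ s, ω s (g i) := by
    rw [hcol, sum_mul_comp hconso (fun r => ω r (g i))]
  have hmEdges (r s : G) : blockSum μ {i | g i = r} {j | g j = s} = ω r s := by
    rw [hrow_fiber, sum_fiber_mul_comp hconso (fun r => ω r s)]
  have hdGrpOut (r : G) : blockSum μ {i | g i = r} univ = ∑ s, ω r s := by
    rw [hrow_univ, sum_fiber_mul_comp hconso (fun r => ∑ s, ω r s)]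
  have hdGrpIn (r : G) : blockSum μ univ {i | g i = r} = ∑ s, ω s r := by
    rw [hrow_fiber, sum_mul_comp hconso (fun s => ω s r)]
  simp only [llrOfBlocks, hdOut, hdIn, hdTotOut, hdTotIn, hmEdges, hdGrpOut, hdGrpIn]

end Blocks

theorem expectation_llrStat_general
    {Ω : Type*} [MeasureSpace Ω] [IsProbabilityMeasure (ℙ : Measure Ω)]
    {N G : Type*} [Fintype N] [Fintype G] [DecidableEq G]
    (g : N → G) (θo θi : N → ℝ≥0) (ω : G → G → ℝ≥0)
    (hconso : ∀ r : G, ∑ i ∈ Finset.univ.filter (fun i => g i = r), θo i = 1)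
    (hconsi : ∀ r : G, ∑ i ∈ Finset.univ.filter (fun i => g i = r), θi i = 1)
    (A : N → N → Ω → ℕ)
    (hindep : iIndepFun (fun p : N × N => A p.1 p.2) ℙ)
    (hdist : ∀ i j, Measure.map (A i j) ℙ
      = poissonMeasure (θo i * θi j * ω (g i) (g j))) :
    (∫ x, llrStat g (fun i j => A i j x) ∂ℙ)
      = (∑ i : N, ∑ s : G,
            (poissonXLogX (θo i * ω (g i) s) + poissonXLogX (θi i * ω s (g i))))
        - (∑ i : N,
            (poissonXLogX (θo i * ∑ s : G, ω (g i) s)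
              + poissonXLogX (θi i * ∑ s : G, ω s (g i))))
        - (∑ r : G, ∑ s : G, 2 * poissonXLogX (ω r s))
        + (∑ r : G,
            (poissonXLogX (∑ s : G, ω r s) + poissonXLogX (∑ s : G, ω s r))) := by
  have hlaw := hasLaw_blockSum_poissonMeasure hindep
    fun i j => hasLaw_poissonMeasure_of_map_eq (hdist i j)
  simp_rw [llrStat_eq_llrOfBlocks]
  rw [integral_llrOfBlocks g fun S T => (hlaw S T).integrable_xlog]
  simp_rw [(hlaw _ _).integral_xlog]
  exact llrOfBlocks_dcsbm hconso hconsi poissonXLogX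

/-- under the DCSBM null with group-normalized positive parameters, the
expected value of the log-likelihood-ratio statistic `λ̂` equals the expression in terms of
`f(μ) = E[X log X]`, `X ~ Poisson(μ)` (equation (23) of the paper). -/
theorem expectation_llrStat
    {Ω : Type*} [MeasureSpace Ω] [IsProbabilityMeasure (ℙ : Measure Ω)]
    {N G : Type*} [Fintype N] [Fintype G] [DecidableEq G]
    (g : N → G) (θo θi : N → ℝ≥0) (ω : G → G → ℝ≥0)
    (hθo : ∀ i, 0 < θo i) (hθi : ∀ i, 0 < θi i) (hω : ∀ r s, 0 < ω r s)
    (hconso : ∀ r : G, ∑ i ∈ Finset.univ.filter (fun i => g i = r), θo i = 1)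
    (hconsi : ∀ r : G, ∑ i ∈ Finset.univ.filter (fun i => g i = r), θi i = 1)
    (A : N → N → Ω → ℕ)
    (hindep : iIndepFun (fun p : N × N => A p.1 p.2) ℙ)
    (hdist : ∀ i j, Measure.map (A i j) ℙ
      = poissonMeasure (θo i * θi j * ω (g i) (g j))) :
    (∫ x, llrStat g (fun i j => A i j x) ∂ℙ)
      = (∑ i : N, ∑ s : G,
            (poissonXLogX (θo i * ω (g i) s) + poissonXLogX (θi i * ω s (g i))))
        - (∑ i : N,
            (poissonXLogX (θo i * ∑ s : G, ω (g i) s)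
              + poissonXLogX (θi i * ∑ s : G, ω s (g i))))
        - (∑ r : G, ∑ s : G, 2 * poissonXLogX (ω r s))
        + (∑ r : G,
            (poissonXLogX (∑ s : G, ω r s) + poissonXLogX (∑ s : G, ω s r))) :=
  expectation_llrStat_general g θo θi ω hconso hconsi A hindep hdist
end

section
/- Let N be a finite set with group assignment g : N → G (G finite), let (θ_i^o, θ_i^i)_{i∈N} be positive reals with Σ_{i : g i = r} θ_i^o = 1 and Σ_{i : g i = r} θ_i^i = 1 for every r ∈ G, and let (ω_{rs})_{r,s∈G} be positive reals. Then Σ_{i∈N, s∈G} [ θ_i^o ω_{g i, s} log(θ_i^o ω_{g i, s}) + θ_i^i ω_{s, g i} log(θ_i^i ω_{s, g i}) + 1 ] − Σ_{i∈N} [ θ_i^o (Σ_{s} ω_{g i, s}) log(θ_i^o Σ_{s} ω_{g i, s}) + θ_i^i (Σ_{s} ω_{s, g i}) log(θ_i^i Σ_{s} ω_{s, g i}) + 1 ] − Σ_{r,s∈G} [ 2 ω_{rs} log ω_{rs} + 1 ] + Σ_{r∈G} [ (Σ_{s} ω_{rs}) log(Σ_{s} ω_{rs}) + (Σ_{s}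 ω_{sr}) log(Σ_{s} ω_{sr}) + 1 ] = (|G| − 1)(|N| − |G|). -/
open Real Finset

private lemma fiber_sum {N G : Type*} [Fintype N] [Fintype G] [DecidableEq G]
    (g : N → G) (θ : N → ℝ)
    (h : ∀ r : G, ∑ i ∈ Finset.univ.filter (fun i => g i = r), θ i = 1)
    (F : G → ℝ) : ∑ i : N, θ i * F (g i) = ∑ r : G, F r := by
  rw [← Finset.sum_fiberwise Finset.univ g (fun i => θ i * F (g i))]
  refine Finset.sum_congr rfl fun r _ => ?_
  have : ∑ i ∈ Finset.univ.filter (fun i => g i = r), θ i * F (g i)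
      = ∑ i ∈ Finset.univ.filter (fun i => g i = r), θ i * F r :=
    Finset.sum_congr rfl fun i hi => by rw [(Finset.mem_filter.mp hi).2]
  rw [this, ← Finset.sum_mul, h r, one_mul]

/-- the exact algebraic identity obtained by substituting the leading
Taylor term `f(μ) ≈ μ log μ + 1/2` into the expected log-likelihood-ratio formula; the sum
collapses to `(|G| − 1)(|N| − |G|)` (underlying Theorem 1 of the paper). -/
theorem llr_leading_term_identity
    {N G : Type*} [Fintype N] [Fintype G] [DecidableEq G]
    (g : N → G) (θo θi : N → ℝ) (ω : G → G → ℝ)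
    (hθo : ∀ i, 0 < θo i) (hθi : ∀ i, 0 < θi i) (hω : ∀ r s, 0 < ω r s)
    (hconso : ∀ r : G, ∑ i ∈ Finset.univ.filter (fun i => g i = r), θo i = 1)
    (hconsi : ∀ r : G, ∑ i ∈ Finset.univ.filter (fun i => g i = r), θi i = 1) :
    (∑ i : N, ∑ s : G,
        (θo i * ω (g i) s * Real.log (θo i * ω (g i) s)
          + θi i * ω s (g i) * Real.log (θi i * ω s (g i)) + 1))
      - (∑ i : N,
          (θo i * (∑ s : G, ω (g i) s) * Real.log (θo i * ∑ s : G, ω (g i) s)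
            + θi i * (∑ s : G, ω s (g i)) * Real.log (θi i * ∑ s : G, ω s (g i)) + 1))
      - (∑ r : G, ∑ s : G, (2 * (ω r s * Real.log (ω r s)) + 1))
      + (∑ r : G,
          ((∑ s : G, ω r s) * Real.log (∑ s : G, ω r s)
            + (∑ s : G, ω s r) * Real.log (∑ s : G, ω s r) + 1))
    = ((Fintype.card G : ℝ) - 1) * ((Fintype.card N : ℝ) - (Fintype.card G : ℝ)) := by
  classical
  by_cases hGe : IsEmpty G
  · haveI := hGe
    haveI : IsEmpty N := ⟨fun i => hGe.false (g i)⟩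
    simp
  rw [not_isEmpty_iff] at hGe
  have hWo : ∀ r : G, 0 < ∑ s : G, ω r s :=
    fun r => Finset.sum_pos (fun s _ => hω r s) Finset.univ_nonempty
  have hWi : ∀ r : G, 0 < ∑ s : G, ω s r :=
    fun r => Finset.sum_pos (fun s _ => hω s r) Finset.univ_nonempty
  -- A
  have hA : (∑ i : N, ∑ s : G,
        (θo i * ω (g i) s * Real.log (θo i * ω (g i) s)
          + θi i * ω s (g i) * Real.log (θi i * ω s (g i)) + 1))
      = (∑ i : N, θo i * (∑ s : G, ω (g i) s) * Real.log (θo i))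
        + (∑ i : N, θi i * (∑ s : G, ω s (g i)) * Real.log (θi i))
        + (∑ r : G, ∑ s : G, ω r s * Real.log (ω r s))
        + (∑ r : G, ∑ s : G, ω s r * Real.log (ω s r))
        + (Fintype.card N : ℝ) * (Fintype.card G : ℝ) := by
    have key : ∀ i : N, ∑ s : G,
        (θo i * ω (g i) s * Real.log (θo i * ω (g i) s)
          + θi i * ω s (g i) * Real.log (θi i * ω s (g i)) + 1)
      = θo i * (∑ s : G, ω (g i) s) * Real.log (θo i)
        + θi i * (∑ s : G, ω s (g i)) * Real.log (θi i)
        + θo i * (∑ s : G, ω (g i) s * Real.log (ω (g i) s))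
        + θi i * (∑ s : G, ω s (g i) * Real.log (ω s (g i)))
        + (Fintype.card G : ℝ) := by
      intro i
      have : ∀ s : G,
          θo i * ω (g i) s * Real.log (θo i * ω (g i) s)
            + θi i * ω s (g i) * Real.log (θi i * ω s (g i)) + 1
        = θo i * ω (g i) s * Real.log (θo i)
          + θi i * ω s (g i) * Real.log (θi i)
          + θo i * (ω (g i) s * Real.log (ω (g i) s))
          + θi i * (ω s (g i) * Real.log (ω s (g i)))
          + 1 := by
        intro s
        rw [Real.log_mul (hθo i).ne' (hω _ _).ne', Real.log_mul (hθi i).ne' (hω _ _).ne']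
        ring
      rw [Finset.sum_congr rfl (fun s _ => this s)]
      simp only [Finset.sum_add_distrib, Finset.sum_const, Finset.card_univ, nsmul_eq_mul,
        mul_one, ← Finset.sum_mul, ← Finset.mul_sum]
    rw [Finset.sum_congr rfl (fun i _ => key i)]
    simp only [Finset.sum_add_distrib, Finset.sum_const, Finset.card_univ, nsmul_eq_mul]
    rw [fiber_sum g θo hconso (fun r => ∑ s : G, ω r s * Real.log (ω r s)),
      fiber_sum g θi hconsi (fun r => ∑ s : G, ω s r * Real.log (ω s r))]
  -- B
  have hB : (∑ i : N,
          (θo i * (∑ s : G, ω (g i) s) * Real.log (θo i * ∑ s : G, ω (g i) s)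
            + θi i * (∑ s : G, ω s (g i)) * Real.log (θi i * ∑ s : G, ω s (g i)) + 1))
      = (∑ i : N, θo i * (∑ s : G, ω (g i) s) * Real.log (θo i))
        + (∑ i : N, θi i * (∑ s : G, ω s (g i)) * Real.log (θi i))
        + (∑ r : G, (∑ s : G, ω r s) * Real.log (∑ s : G, ω r s))
        + (∑ r : G, (∑ s : G, ω s r) * Real.log (∑ s : G, ω s r))
        + (Fintype.card N : ℝ) := by
    have key : ∀ i : N,
        θo i * (∑ s : G, ω (g i) s) * Real.log (θo i * ∑ s : G, ω (g i) s)
          + θi i * (∑ s : G, ω s (g i)) * Real.log (θi i * ∑ s : G, ω s (g i)) + 1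
      = θo i * (∑ s : G, ω (g i) s) * Real.log (θo i)
        + θi i * (∑ s : G, ω s (g i)) * Real.log (θi i)
        + θo i * ((∑ s : G, ω (g i) s) * Real.log (∑ s : G, ω (g i) s))
        + θi i * ((∑ s : G, ω s (g i)) * Real.log (∑ s : G, ω s (g i)))
        + 1 := by
      intro i
      rw [Real.log_mul (hθo i).ne' (hWo _).ne', Real.log_mul (hθi i).ne' (hWi _).ne']
      ring
    rw [Finset.sum_congr rfl (fun i _ => key i)]
    simp only [Finset.sum_add_distrib, Finset.sum_const, Finset.card_univ, nsmul_eq_mul,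
      mul_one]
    rw [fiber_sum g θo hconso (fun r => (∑ s : G, ω r s) * Real.log (∑ s : G, ω r s)),
      fiber_sum g θi hconsi (fun r => (∑ s : G, ω s r) * Real.log (∑ s : G, ω s r))]
  -- C
  have hC : (∑ r : G, ∑ s : G, (2 * (ω r s * Real.log (ω r s)) + 1))
      = 2 * (∑ r : G, ∑ s : G, ω r s * Real.log (ω r s))
        + (Fintype.card G : ℝ) * (Fintype.card G : ℝ) := by
    simp only [Finset.sum_add_distrib, Finset.sum_const, Finset.card_univ, nsmul_eq_mul,
      mul_one, ← Finset.mul_sum]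
  -- D
  have hD : (∑ r : G,
          ((∑ s : G, ω r s) * Real.log (∑ s : G, ω r s)
            + (∑ s : G, ω s r) * Real.log (∑ s : G, ω s r) + 1))
      = (∑ r : G, (∑ s : G, ω r s) * Real.log (∑ s : G, ω r s))
        + (∑ r : G, (∑ s : G, ω s r) * Real.log (∑ s : G, ω s r))
        + (Fintype.card G : ℝ) := by
    simp only [Finset.sum_add_distrib, Finset.sum_const, Finset.card_univ, nsmul_eq_mul,
      mul_one]
  have hswap : (∑ r : G, ∑ s : G, ω s r * Real.log (ω s r))
      = ∑ r : G, ∑ s : G, ω r s * Real.log (ω r s) := Finset.sum_comm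
  rw [hA, hB, hC, hD, hswap]
  ring
end

section
/- Assume d_{i,s}^o > 0 and d_{i,s}^i > 0 for every i ∈ N and s ∈ G (which implies m_{rs} > 0 for all r, s). Among all positive parameter families (Θ, Ω) satisfying the group-level constraints Σ_{i : g i = r} θ_{i,s}^o = 1 and Σ_{i : g i = r} θ_{i,s}^i = 1 for all r, s ∈ G, the log-likelihood ℓ(Θ, Ω) is maximized at θ̂_{i,s}^o = d_{i,s}^o / m_{g i, s}, θ̂_{i,s}^i = d_{i,s}^i / m_{s, g i}, and ω̂_{rs} = m_{rs}; that is, ℓ(Θ, Ω) ≤ ℓ(Θ̂, Ω̂) for every feasible (Θ, Ω). -/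
open Finset

/-- Poisson log-likelihood of the directed mixed-propensity model given the adjacency
matrix `a`:
`ℓ(Θ, Ω) = ∑_{i,j} [A i j · log(θ_{i,gj}^o θ_{j,gi}^i ω_{gi,gj}) − θ_{i,gj}^o θ_{j,gi}^i ω_{gi,gj}]`. -/
noncomputable def loglik {N G : Type*} [Fintype N] (g : N → G) (a : N → N → ℕ)
    (θo θi : N → G → ℝ) (ω : G → G → ℝ) : ℝ :=
  ∑ i : N, ∑ j : N,
    ((a i j : ℝ) * Real.log (θo i (g j) * θi j (g i) * ω (g i) (g j))
      - θo i (g j) * θi j (g i) * ω (g i) (g j))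

/-- Gibbs' inequality form. -/
lemma gibbs_aux {α : Type*} {S : Finset α} {d θf : α → ℝ} {M : ℝ}
    (hd : ∀ i ∈ S, 0 < d i) (hθ : ∀ i ∈ S, 0 < θf i) (hM : 0 < M)
    (hsd : ∑ i ∈ S, d i = M) (hsθ : ∑ i ∈ S, θf i = 1) :
    ∑ i ∈ S, d i * Real.log (θf i) ≤ ∑ i ∈ S, d i * Real.log (d i / M) := by
  have h : ∀ i ∈ S, d i * Real.log (θf i) - d i * Real.log (d i / M) ≤ θf i * M - d i := by
    intro i hi
    have hdi := hd i hi; have hθi := hθ i hi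
    have hx : 0 < θf i * M / d i := by positivity
    have hlog := Real.log_le_sub_one_of_pos hx
    have heq : Real.log (θf i) - Real.log (d i / M) = Real.log (θf i * M / d i) := by
      rw [Real.log_div (by positivity) hM.ne', Real.log_div (by positivity) hdi.ne',
        Real.log_mul hθi.ne' hM.ne']
      ring
    have h2 : d i * Real.log (θf i * M / d i) ≤ d i * (θf i * M / d i - 1) :=
      mul_le_mul_of_nonneg_left hlog hdi.le
    have h3 : d i * (θf i * M / d i - 1) = θf i * M - d i := by
      field_simp
    nlinarith [h2, h3, heq]
  have h4 := Finset.sum_le_sum h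
  rw [Finset.sum_sub_distrib] at h4
  have h2 : ∑ i ∈ S, (θf i * M - d i) = 0 := by
    rw [Finset.sum_sub_distrib, ← Finset.sum_mul, hsθ, hsd]; ring
  rw [h2] at h4
  linarith

/-- Maximizer of `ω ↦ m log ω - ω`. -/
lemma omega_aux {m ω : ℝ} (hm : 0 < m) (hω : 0 < ω) :
    m * Real.log ω - ω ≤ m * Real.log m - m := by
  have hx : 0 < ω / m := by positivity
  have hlog := Real.log_le_sub_one_of_pos hx
  rw [Real.log_div hω.ne' hm.ne'] at hlog
  have h2 := mul_le_mul_of_nonneg_left hlog hm.le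
  have h3 : m * (ω / m) = ω := by field_simp
  nlinarith

/-- Double fiberwise decomposition. -/
lemma double_fiber_aux {N G : Type*} [Fintype N] [Fintype G] [DecidableEq G]
    (g : N → G) (F : N → N → ℝ) :
    ∑ i : N, ∑ j : N, F i j =
      ∑ r : G, ∑ s : G, ∑ i ∈ Finset.univ.filter (fun i => g i = r),
        ∑ j ∈ Finset.univ.filter (fun j => g j = s), F i j := by
  have h1 := Finset.sum_fiberwise (κ := G) (Finset.univ : Finset N) g (fun i => ∑ j : N, F i j)
  rw [← h1]
  refine Finset.sum_congr rfl fun r _ => ?_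
  rw [Finset.sum_comm (s := (Finset.univ : Finset G))
    (t := Finset.univ.filter (fun i => g i = r))
    (f := fun s i => ∑ j ∈ Finset.univ.filter (fun j => g j = s), F i j)]
  refine Finset.sum_congr rfl fun i _ => ?_
  have h2 := Finset.sum_fiberwise (κ := G) (Finset.univ : Finset N) g (fun j => F i j)
  rw [h2]

/-- Per-block decomposition of the log-likelihood summand. -/
lemma block_eq_aux {N G : Type*} [Fintype N] [Fintype G] [DecidableEq G]
    (g : N → G) (a : N → N → ℕ) (θo θi : N → G → ℝ) (ω : G → G → ℝ)
    (hθo : ∀ i s, 0 < θo i s) (hθi : ∀ i s, 0 < θi i s) (hω : ∀ r s, 0 < ω r s) (r s : G) :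
    ∑ i ∈ Finset.univ.filter (fun i => g i = r),
      ∑ j ∈ Finset.univ.filter (fun j => g j = s),
        ((a i j : ℝ) * Real.log (θo i (g j) * θi j (g i) * ω (g i) (g j))
          - θo i (g j) * θi j (g i) * ω (g i) (g j))
    = (∑ i ∈ Finset.univ.filter (fun i => g i = r), (dOut g a i s : ℝ) * Real.log (θo i s))
      + (∑ j ∈ Finset.univ.filter (fun j => g j = s), (dIn g a j r : ℝ) * Real.log (θi j r))
      + ((mEdges g a r s : ℝ) * Real.log (ω r s)
        - ω r s * (∑ i ∈ Finset.univ.filter (fun i => g i = r), θo i s)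
                * (∑ j ∈ Finset.univ.filter (fun j => g j = s), θi j r)) := by
  have key : ∑ i ∈ Finset.univ.filter (fun i => g i = r),
      ∑ j ∈ Finset.univ.filter (fun j => g j = s),
        ((a i j : ℝ) * Real.log (θo i (g j) * θi j (g i) * ω (g i) (g j))
          - θo i (g j) * θi j (g i) * ω (g i) (g j))
      = ∑ i ∈ Finset.univ.filter (fun i => g i = r),
          ∑ j ∈ Finset.univ.filter (fun j => g j = s),
            ((a i j : ℝ) * Real.log (θo i s) + (a i j : ℝ) * Real.log (θi j r)
              + (a i j : ℝ) * Real.log (ω r s) - θo i s * θi j r * ω r s) := by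
    refine Finset.sum_congr rfl fun i hi => Finset.sum_congr rfl fun j hj => ?_
    rw [Finset.mem_filter] at hi hj
    rw [hi.2, hj.2, Real.log_mul (mul_pos (hθo i s) (hθi j r)).ne' (hω r s).ne',
      Real.log_mul (hθo i s).ne' (hθi j r).ne']
    ring
  rw [key]
  simp only [Finset.sum_add_distrib, Finset.sum_sub_distrib]
  have hA : ∑ i ∈ Finset.univ.filter (fun i => g i = r),
      ∑ j ∈ Finset.univ.filter (fun j => g j = s), (a i j : ℝ) * Real.log (θo i s)
      = ∑ i ∈ Finset.univ.filter (fun i => g i = r), (dOut g a i s : ℝ) * Real.log (θo i s) := by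
    refine Finset.sum_congr rfl fun i _ => ?_
    rw [← Finset.sum_mul, dOut, Nat.cast_sum]
  have hB : ∑ i ∈ Finset.univ.filter (fun i => g i = r),
      ∑ j ∈ Finset.univ.filter (fun j => g j = s), (a i j : ℝ) * Real.log (θi j r)
      = ∑ j ∈ Finset.univ.filter (fun j => g j = s), (dIn g a j r : ℝ) * Real.log (θi j r) := by
    rw [Finset.sum_comm (s := Finset.univ.filter (fun i => g i = r))
      (t := Finset.univ.filter (fun j => g j = s))
      (f := fun i j => (a i j : ℝ) * Real.log (θi j r))]
    refine Finset.sum_congr rfl fun j _ => ?_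
    rw [← Finset.sum_mul, dIn, Nat.cast_sum]
  have hC : ∑ i ∈ Finset.univ.filter (fun i => g i = r),
      ∑ j ∈ Finset.univ.filter (fun j => g j = s), (a i j : ℝ) * Real.log (ω r s)
      = (mEdges g a r s : ℝ) * Real.log (ω r s) := by
    simp_rw [← Finset.sum_mul]
    rw [mEdges]
    push_cast
    rfl
  have hD : ∑ i ∈ Finset.univ.filter (fun i => g i = r),
      ∑ j ∈ Finset.univ.filter (fun j => g j = s), θo i s * θi j r * ω r s
      = ω r s * (∑ i ∈ Finset.univ.filter (fun i => g i = r), θo i s)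
              * (∑ j ∈ Finset.univ.filter (fun j => g j = s), θi j r) := by
    have h1 : ∀ i ∈ Finset.univ.filter (fun i => g i = r),
        ∑ j ∈ Finset.univ.filter (fun j => g j = s), θo i s * θi j r * ω r s
        = θo i s * ((∑ j ∈ Finset.univ.filter (fun j => g j = s), θi j r) * ω r s) := by
      intro i _
      rw [← Finset.sum_mul, ← Finset.mul_sum]
      ring
    rw [Finset.sum_congr rfl h1, ← Finset.sum_mul]
    ring
  rw [hA, hB, hC, hD]
  ring

/-- Decomposition of the log-likelihood into per-group-pair blocks. -/
lemma loglik_decomp_aux {N G : Type*} [Fintype N] [Fintype G] [DecidableEq G]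
    (g : N → G) (a : N → N → ℕ) (θo θi : N → G → ℝ) (ω : G → G → ℝ)
    (hθo : ∀ i s, 0 < θo i s) (hθi : ∀ i s, 0 < θi i s) (hω : ∀ r s, 0 < ω r s) :
    loglik g a θo θi ω
    = ∑ r : G, ∑ s : G,
      ((∑ i ∈ Finset.univ.filter (fun i => g i = r), (dOut g a i s : ℝ) * Real.log (θo i s))
      + (∑ j ∈ Finset.univ.filter (fun j => g j = s), (dIn g a j r : ℝ) * Real.log (θi j r))
      + ((mEdges g a r s : ℝ) * Real.log (ω r s)
        - ω r s * (∑ i ∈ Finset.univ.filter (fun i => g i = r), θo i s)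
                * (∑ j ∈ Finset.univ.filter (fun j => g j = s), θi j r))) := by
  rw [loglik, double_fiber_aux g]
  exact Finset.sum_congr rfl fun r _ => Finset.sum_congr rfl fun s _ =>
    block_eq_aux g a θo θi ω hθo hθi hω r s

/-- under the group-level constraints, the log-likelihood of the
mixed-propensity model is maximized at `θ̂_{i,s}^o = d_{i,s}^o / m_{gi,s}`,
`θ̂_{i,s}^i = d_{i,s}^i / m_{s,gi}`, `ω̂_{rs} = m_{rs}`. -/
theorem loglik_le_mle
    {N G : Type*} [Fintype N] [Fintype G] [DecidableEq G]
    (g : N → G) (a : N → N → ℕ)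
    (hdO : ∀ i s, 0 < dOut g a i s) (hdI : ∀ i s, 0 < dIn g a i s)
    (θo θi : N → G → ℝ) (ω : G → G → ℝ)
    (hθo : ∀ i s, 0 < θo i s) (hθi : ∀ i s, 0 < θi i s) (hω : ∀ r s, 0 < ω r s)
    (hconso : ∀ r s : G, ∑ i ∈ Finset.univ.filter (fun i => g i = r), θo i s = 1)
    (hconsi : ∀ r s : G, ∑ i ∈ Finset.univ.filter (fun i => g i = r), θi i s = 1) :
    loglik g a θo θi ω ≤
      loglik g a
        (fun i s => (dOut g a i s : ℝ) / (mEdges g a (g i) s : ℝ))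
        (fun i s => (dIn g a i s : ℝ) / (mEdges g a s (g i) : ℝ))
        (fun r s => (mEdges g a r s : ℝ)) := by
  classical
  -- every group is nonempty
  have hne : ∀ r : G, (Finset.univ.filter (fun i => g i = r)).Nonempty := by
    intro r
    by_contra h
    rw [Finset.not_nonempty_iff_eq_empty] at h
    have h1 := hconso r r
    rw [h, Finset.sum_empty] at h1
    norm_num at h1
  have hm : ∀ r s, 0 < mEdges g a r s := by
    intro r s
    obtain ⟨i, hi⟩ := hne r
    rw [Finset.mem_filter] at hi
    calc 0 < dOut g a i s := hdO i s
    _ ≤ _ := by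
      rw [mEdges]
      exact Finset.single_le_sum (f := fun i => ∑ j ∈ Finset.univ.filter (fun j => g j = s), a i j)
        (fun k _ => Nat.zero_le _) (by simp [hi.2])
  have hmR : ∀ r s, (0:ℝ) < (mEdges g a r s : ℝ) := fun r s => by exact_mod_cast hm r s
  have hsumO : ∀ r s, ∑ i ∈ Finset.univ.filter (fun i => g i = r), (dOut g a i s : ℝ)
      = (mEdges g a r s : ℝ) := by
    intro r s
    rw [mEdges, Nat.cast_sum]
    exact Finset.sum_congr rfl fun i _ => by rw [dOut, Nat.cast_sum]
  have hsumI : ∀ r s, ∑ j ∈ Finset.univ.filter (fun j => g j = s), (dIn g a j r : ℝ)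
      = (mEdges g a r s : ℝ) := by
    intro r s
    have h : ∑ j ∈ Finset.univ.filter (fun j => g j = s), dIn g a j r = mEdges g a r s := by
      simp only [dIn, mEdges]
      exact Finset.sum_comm
    rw [← h, Nat.cast_sum]
  have hθo' : ∀ (i : N) (s : G), 0 < (dOut g a i s : ℝ) / (mEdges g a (g i) s : ℝ) :=
    fun i s => div_pos (by exact_mod_cast hdO i s) (hmR _ _)
  have hθi' : ∀ (i : N) (s : G), 0 < (dIn g a i s : ℝ) / (mEdges g a s (g i) : ℝ) :=
    fun i s => div_pos (by exact_mod_cast hdI i s) (hmR _ _)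
  rw [loglik_decomp_aux g a θo θi ω hθo hθi hω,
    loglik_decomp_aux g a _ _ _ hθo' hθi' hmR]
  refine Finset.sum_le_sum fun r _ => Finset.sum_le_sum fun s _ => ?_
  -- rewrite hat parameters inside the fibers
  have hXhat : ∑ i ∈ Finset.univ.filter (fun i => g i = r),
      (dOut g a i s : ℝ) * Real.log ((dOut g a i s : ℝ) / (mEdges g a (g i) s : ℝ))
      = ∑ i ∈ Finset.univ.filter (fun i => g i = r),
      (dOut g a i s : ℝ) * Real.log ((dOut g a i s : ℝ) / (mEdges g a r s : ℝ)) :=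
    Finset.sum_congr rfl fun i hi => by rw [(Finset.mem_filter.1 hi).2]
  have hYhat : ∑ j ∈ Finset.univ.filter (fun j => g j = s),
      (dIn g a j r : ℝ) * Real.log ((dIn g a j r : ℝ) / (mEdges g a r (g j) : ℝ))
      = ∑ j ∈ Finset.univ.filter (fun j => g j = s),
      (dIn g a j r : ℝ) * Real.log ((dIn g a j r : ℝ) / (mEdges g a r s : ℝ)) :=
    Finset.sum_congr rfl fun j hj => by rw [(Finset.mem_filter.1 hj).2]
  have hSo : ∑ i ∈ Finset.univ.filter (fun i => g i = r),
      (dOut g a i s : ℝ) / (mEdges g a (g i) s : ℝ) = 1 := by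
    rw [Finset.sum_congr rfl (fun i hi => by rw [(Finset.mem_filter.1 hi).2] :
      ∀ i ∈ Finset.univ.filter (fun i => g i = r),
        (dOut g a i s : ℝ) / (mEdges g a (g i) s : ℝ)
        = (dOut g a i s : ℝ) / (mEdges g a r s : ℝ)),
      ← Finset.sum_div, hsumO r s, div_self (hmR r s).ne']
  have hSi : ∑ j ∈ Finset.univ.filter (fun j => g j = s),
      (dIn g a j r : ℝ) / (mEdges g a r (g j) : ℝ) = 1 := by
    rw [Finset.sum_congr rfl (fun j hj => by rw [(Finset.mem_filter.1 hj).2] :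
      ∀ j ∈ Finset.univ.filter (fun j => g j = s),
        (dIn g a j r : ℝ) / (mEdges g a r (g j) : ℝ)
        = (dIn g a j r : ℝ) / (mEdges g a r s : ℝ)),
      ← Finset.sum_div, hsumI r s, div_self (hmR r s).ne']
  rw [hXhat, hYhat, hSo, hSi, hconso r s, hconsi s r]
  have gX := gibbs_aux (S := Finset.univ.filter (fun i => g i = r))
    (d := fun i => (dOut g a i s : ℝ)) (θf := fun i => θo i s) (M := (mEdges g a r s : ℝ))
    (fun i _ => Nat.cast_pos.mpr (hdO i s)) (fun i _ => hθo i s) (hmR r s)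
    (hsumO r s) (hconso r s)
  have gY := gibbs_aux (S := Finset.univ.filter (fun j => g j = s))
    (d := fun j => (dIn g a j r : ℝ)) (θf := fun j => θi j r) (M := (mEdges g a r s : ℝ))
    (fun j _ => Nat.cast_pos.mpr (hdI j r)) (fun j _ => hθi j r) (hmR r s)
    (hsumI r s) (hconsi s r)
  have gW := omega_aux (hmR r s) (hω r s)
  simp only [mul_one]
  linarith
end

section
/- Fix a positive parameter family Θ = (θ_{i,s}^o, θ_{i,s}^i)_{i∈N,s∈G}, and assume m_{rs} > 0 for all r, s ∈ G. Then the log-likelihood ℓ(Θ, Ω), viewed as a function of the positive parameters Ω = (ω_{rs})_{r,s∈G}, is uniquely maximized at ω̂_{rs} = m_{rs} / ( Σ_{i : g i = r} Σ_{j : g j = s} θ_{i,s}^o θ_{j,r}^i ) for each pair (r, s) ∈ G × G. -/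
open Finset Real

lemma mul_log_div_sub_sub_mul_log_sub (m T x : ℝ) (hm : 0 < m) (hT : 0 < T) (hx : 0 < x) :
    (m * log (m / T) - T * (m / T)) - (m * log x - T * x) =
      m * ((x * T / m - 1) - log (x * T / m)) := by
  rw [log_div hm.ne' hT.ne', log_div (by positivity) hm.ne', log_mul hx.ne' hT.ne']
  field_simp
  ring

lemma mul_log_sub_mul_le_div (m T x : ℝ) (hm : 0 < m) (hT : 0 < T) (hx : 0 < x) :
    m * log x - T * x ≤ m * log (m / T) - T * (m / T) := by
  have h := mul_log_div_sub_sub_mul_log_sub m T x hm hT hx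
  have hlog := log_le_sub_one_of_pos (show 0 < x * T / m by positivity)
  nlinarith

lemma mul_log_sub_mul_lt_div (m T x : ℝ) (hm : 0 < m) (hT : 0 < T) (hx : 0 < x)
    (hne : x ≠ m / T) :
    m * log x - T * x < m * log (m / T) - T * (m / T) := by
  have h := mul_log_div_sub_sub_mul_log_sub m T x hm hT hx
  have hy : x * T / m ≠ 1 := by
    rw [ne_eq, div_eq_one_iff_eq hm.ne', ← eq_div_iff hT.ne']
    exact hne
  have hlog := log_lt_sub_one_of_pos (show 0 < x * T / m by positivity) hy
  nlinarith

lemma sum_mul_log_sub_mul_le {ι : Type*} [Fintype ι] (m T x : ι → ℝ)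
    (hm : ∀ k, 0 < m k) (hT : ∀ k, 0 < T k) (hx : ∀ k, 0 < x k) :
    ∑ k, (m k * log (x k) - T k * x k) ≤
      ∑ k, (m k * log (m k / T k) - T k * (m k / T k)) :=
  sum_le_sum fun k _ => mul_log_sub_mul_le_div _ _ _ (hm k) (hT k) (hx k)

lemma eq_div_of_sum_mul_log_sub_mul_eq {ι : Type*} [Fintype ι] (m T x : ι → ℝ)
    (hm : ∀ k, 0 < m k) (hT : ∀ k, 0 < T k) (hx : ∀ k, 0 < x k)
    (h : ∑ k, (m k * log (x k) - T k * x k) =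
      ∑ k, (m k * log (m k / T k) - T k * (m k / T k))) :
    x = fun k => m k / T k := by
  rw [sum_eq_sum_iff_of_le fun k _ => mul_log_sub_mul_le_div _ _ _ (hm k) (hT k) (hx k)] at h
  funext k
  by_contra hne
  exact (mul_log_sub_mul_lt_div _ _ _ (hm k) (hT k) (hx k) hne).ne (h k (mem_univ k))

lemma sum_sum_eq_sum_sum_fiberwise {N G M : Type*} [Fintype N] [Fintype G] [DecidableEq G]
    [AddCommMonoid M] (g : N → G) (F : N → N → M) :
    ∑ i, ∑ j, F i j =
      ∑ r, ∑ s, ∑ i ∈ univ.filter (fun i => g i = r), ∑ j ∈ univ.filter (fun j => g j = s),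
        F i j := by
  rw [← sum_fiberwise univ g]
  refine sum_congr rfl fun r _ => ?_
  rw [sum_comm, ← sum_fiberwise univ g]
  exact sum_congr rfl fun s _ => sum_comm

/-- The denominator `T_{rs}` of the maximizer `ω̂_{rs} = m_{rs} / T_{rs}`. -/
def propensityMass {N G : Type*} [Fintype N] [DecidableEq G] (g : N → G) (θo θi : N → G → ℝ)
    (r s : G) : ℝ :=
  ∑ i ∈ univ.filter (fun i => g i = r), ∑ j ∈ univ.filter (fun j => g j = s), θo i s * θi j r

lemma filter_nonempty_of_mEdges_pos {N G : Type*} [Fintype N] [DecidableEq G] {g : N → G}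
    {a : N → N → ℕ} {r s : G} (h : 0 < mEdges g a r s) :
    (univ.filter (fun i => g i = r)).Nonempty ∧ (univ.filter (fun j => g j = s)).Nonempty := by
  obtain ⟨i, -, hi⟩ := exists_ne_zero_of_sum_ne_zero h.ne'
  exact ⟨nonempty_of_sum_ne_zero h.ne', nonempty_of_sum_ne_zero hi⟩

lemma propensityMass_pos {N G : Type*} [Fintype N] [DecidableEq G] {g : N → G}
    {a : N → N → ℕ} {θo θi : N → G → ℝ} (hθo : ∀ i s, 0 < θo i s) (hθi : ∀ i s, 0 < θi i s)
    {r s : G} (h : 0 < mEdges g a r s) : 0 < propensityMass g θo θi r s := by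
  obtain ⟨hr, hs⟩ := filter_nonempty_of_mEdges_pos h
  exact sum_pos (fun i _ => sum_pos (fun j _ => mul_pos (hθo i s) (hθi j r)) hs) hr

lemma loglik_eq_add_sum_blocks {N G : Type*} [Fintype N] [Fintype G] [DecidableEq G]
    (g : N → G) (a : N → N → ℕ) {θo θi : N → G → ℝ}
    (hθo : ∀ i s, 0 < θo i s) (hθi : ∀ i s, 0 < θi i s)
    {ω : G → G → ℝ} (hω : ∀ r s, 0 < ω r s) :
    loglik g a θo θi ω =
      ∑ i, ∑ j, (a i j : ℝ) * log (θo i (g j) * θi j (g i)) +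
        ∑ p : G × G, ((mEdges g a p.1 p.2 : ℝ) * log (ω p.1 p.2) -
          propensityMass g θo θi p.1 p.2 * ω p.1 p.2) := by
  have hsplit : ∀ i j, (a i j : ℝ) * log (θo i (g j) * θi j (g i) * ω (g i) (g j)) -
      θo i (g j) * θi j (g i) * ω (g i) (g j) =
        (a i j : ℝ) * log (θo i (g j) * θi j (g i)) +
          ((a i j : ℝ) * log (ω (g i) (g j)) - θo i (g j) * θi j (g i) * ω (g i) (g j)) := by
    intro i j
    rw [log_mul (mul_pos (hθo _ _) (hθi _ _)).ne' (hω _ _).ne']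
    ring
  simp only [loglik, hsplit, sum_add_distrib, Fintype.sum_prod_type]
  rw [sum_sum_eq_sum_sum_fiberwise g (fun i j => (a i j : ℝ) * log (ω (g i) (g j)) -
    θo i (g j) * θi j (g i) * ω (g i) (g j))]
  congr 1
  refine sum_congr rfl fun r _ => sum_congr rfl fun s _ => ?_
  simp only [mEdges, propensityMass, Nat.cast_sum, sum_sub_distrib, sum_mul]
  congr 1 <;>
  refine sum_congr rfl fun i hi => sum_congr rfl fun j hj => ?_ <;>
  rw [(mem_filter.mp hi).2, (mem_filter.mp hj).2]

/-- for a fixed positive propensity family `Θ`, and provided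
`m_{rs} > 0` for all `r, s`, the log-likelihood as a function of the positive parameters
`Ω` is uniquely maximized at
`ω̂_{rs} = m_{rs} / (∑_{i : g i = r} ∑_{j : g j = s} θ_{i,s}^o θ_{j,r}^i)`. -/
theorem loglik_omega_unique_max
    {N G : Type*} [Fintype N] [Fintype G] [DecidableEq G]
    (g : N → G) (a : N → N → ℕ)
    (θo θi : N → G → ℝ)
    (hθo : ∀ i s, 0 < θo i s) (hθi : ∀ i s, 0 < θi i s)
    (hm : ∀ r s : G, 0 < mEdges g a r s) :
    (∀ ω : G → G → ℝ, (∀ r s, 0 < ω r s) →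
      loglik g a θo θi ω ≤
        loglik g a θo θi
          (fun r s => (mEdges g a r s : ℝ) /
            (∑ i ∈ Finset.univ.filter (fun i => g i = r),
              ∑ j ∈ Finset.univ.filter (fun j => g j = s), θo i s * θi j r))) ∧
    (∀ ω : G → G → ℝ, (∀ r s, 0 < ω r s) →
      loglik g a θo θi ω =
        loglik g a θo θi
          (fun r s => (mEdges g a r s : ℝ) /
            (∑ i ∈ Finset.univ.filter (fun i => g i = r),
              ∑ j ∈ Finset.univ.filter (fun j => g j = s), θo i s * θi j r)) →
      ω = fun r s => (mEdges g a r s : ℝ) /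
        (∑ i ∈ Finset.univ.filter (fun i => g i = r),
          ∑ j ∈ Finset.univ.filter (fun j => g j = s), θo i s * θi j r)) := by
  have hmR : ∀ p : G × G, (0 : ℝ) < mEdges g a p.1 p.2 := fun p => by exact_mod_cast hm p.1 p.2
  have hT : ∀ p : G × G, 0 < propensityMass g θo θi p.1 p.2 :=
    fun p => propensityMass_pos hθo hθi (hm p.1 p.2)
  have hωhat : ∀ r s, 0 < (mEdges g a r s : ℝ) / propensityMass g θo θi r s :=
    fun r s => div_pos (hmR (r, s)) (hT (r, s))
  simp only [← propensityMass.eq_1]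
  have hdecomp := fun (ω : G → G → ℝ) (hω : ∀ r s, 0 < ω r s) =>
    loglik_eq_add_sum_blocks g a hθo hθi hω
  refine ⟨fun ω hω => ?_, fun ω hω heq => ?_⟩
  · rw [hdecomp ω hω, hdecomp _ hωhat]
    exact add_le_add le_rfl (sum_mul_log_sub_mul_le _ _ _ hmR hT fun p => hω p.1 p.2)
  · rw [hdecomp ω hω, hdecomp _ hωhat] at heq
    have h := eq_div_of_sum_mul_log_sub_mul_eq _ _ (fun p : G × G => ω p.1 p.2) hmR hT
      (fun p => hω p.1 p.2) (add_left_cancel heq)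
    funext r s
    exact congrFun h (r, s)
end

section
/- Assume d_{i,s}^o > 0 and d_{i,s}^i > 0 for every i ∈ N and s ∈ G, and suppose that within each group all total degrees are equal: for every r ∈ G and all i, j with g i = g j = r, d_i^o = d_j^o and d_i^i = d_j^i. Then the parameters θ̂_{i,s}^o = d_{i,s}^o / d_i^o and θ̂_{i,s}^i = d_{i,s}^i / d_i^i satisfy the node-level constraints Σ_{s∈G} θ̂_{i,s}^o = 1 and Σ_{s∈G} θ̂_{i,s}^i = 1, and, together with ω̂_{rs} = m_{rs} / ( Σ_{i : g i = r} Σ_{j : g j = s} θ̂_{i,s}^o θ̂_{j,r}^i ), satisfy the maximum-likelihood stationarity system: for every i ∈ N and all g₁, g₂ ∈ G, Σ_{j : g j = g₁} ( ω̂_{g i, g₁} θ̂_{j, g i}^i − A i j / θ̂_{i, g₁}^o ) = Σ_{j : g j = g₂} ( ω̂_{g i, g₂} θ̂_{j, g i}^i − A i j / θ̂_{i, g₂}^o ), and Σ_{j : g j = g₁} ( ω̂_{g₁, g i} θ̂_{j, g i}^o − A j i / θ̂_{i, g₁}^i ) = Σ_{j : g j = g₂} ( ω̂_{g₂, g i}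 θ̂_{j, g i}^o − A j i / θ̂_{i, g₂}^i ). -/
/-- Candidate node-level outgoing propensity `θ̂_{i,s}^o = d_{i,s}^o / d_i^o`. -/
noncomputable def thetaHatO {N G : Type*} [Fintype N] [DecidableEq G]
    (g : N → G) (a : N → N → ℕ) (i : N) (s : G) : ℝ :=
  (dOut g a i s : ℝ) / (dTotOut a i : ℝ)

/-- Candidate node-level incoming propensity `θ̂_{i,s}^i = d_{i,s}^i / d_i^i`. -/
noncomputable def thetaHatI {N G : Type*} [Fintype N] [DecidableEq G]
    (g : N → G) (a : N → N → ℕ) (i : N) (s : G) : ℝ :=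
  (dIn g a i s : ℝ) / (dTotIn a i : ℝ)

/-- `ω̂_{rs} = m_{rs} / (∑_{i : g i = r} ∑_{j : g j = s} θ̂_{i,s}^o θ̂_{j,r}^i)`. -/
noncomputable def omegaHat {N G : Type*} [Fintype N] [DecidableEq G]
    (g : N → G) (a : N → N → ℕ) (r s : G) : ℝ :=
  (mEdges g a r s : ℝ) /
    (∑ i ∈ Finset.univ.filter (fun i => g i = r),
      ∑ j ∈ Finset.univ.filter (fun j => g j = s),
        thetaHatO g a i s * thetaHatI g a j r)

set_option linter.unusedSectionVars false

section Aux

variable {N G : Type*} [Fintype N] [Fintype G] [DecidableEq G] (g : N → G) (a : N → N → ℕ)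

lemma aux_sum_dOut (i : N) : ∑ s : G, dOut g a i s = dTotOut a i :=
  Finset.sum_fiberwise Finset.univ g (a i)

lemma aux_sum_dIn (i : N) : ∑ s : G, dIn g a i s = dTotIn a i :=
  Finset.sum_fiberwise Finset.univ g (fun j => a j i)

lemma aux_dOut_le (i : N) (s : G) : dOut g a i s ≤ dTotOut a i := by
  rw [← aux_sum_dOut g a i]
  exact Finset.single_le_sum (fun _ _ => Nat.zero_le _) (Finset.mem_univ s)

lemma aux_dIn_le (i : N) (s : G) : dIn g a i s ≤ dTotIn a i := by
  rw [← aux_sum_dIn g a i]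
  exact Finset.single_le_sum (fun _ _ => Nat.zero_le _) (Finset.mem_univ s)

lemma aux_mEdges_eq_sum_dOut (r s : G) :
    mEdges g a r s = ∑ i ∈ Finset.univ.filter (fun i => g i = r), dOut g a i s := rfl

lemma aux_mEdges_eq_sum_dIn (r s : G) :
    mEdges g a r s = ∑ j ∈ Finset.univ.filter (fun j => g j = s), dIn g a j r := by
  rw [aux_mEdges_eq_sum_dOut]
  simp only [dOut, dIn]
  exact Finset.sum_comm

variable (hdO : ∀ i s, 0 < dOut g a i s) (hdI : ∀ i s, 0 < dIn g a i s)

include hdO in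
lemma aux_dTotOut_pos (i : N) : 0 < dTotOut a i :=
  lt_of_lt_of_le (hdO i (g i)) (aux_dOut_le g a i (g i))

include hdI in
lemma aux_dTotIn_pos (i : N) : 0 < dTotIn a i :=
  lt_of_lt_of_le (hdI i (g i)) (aux_dIn_le g a i (g i))

include hdO hdI in
lemma aux_thetaO_pos (i : N) (s : G) : 0 < thetaHatO g a i s := by
  have := aux_dTotOut_pos g a hdO i
  have := hdO i s
  unfold thetaHatO
  positivity

include hdO hdI in
lemma aux_thetaI_pos (i : N) (s : G) : 0 < thetaHatI g a i s := by
  have := aux_dTotIn_pos g a hdI i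
  have := hdI i s
  unfold thetaHatI
  positivity

include hdO in
lemma aux_group_nonempty (i : N) (s : G) :
    (Finset.univ.filter (fun j => g j = s)).Nonempty := by
  by_contra h
  rw [Finset.not_nonempty_iff_eq_empty] at h
  have := hdO i s
  simp [dOut, h] at this

include hdO hdI in
lemma key_out (heqO : ∀ i j : N, g i = g j → dTotOut a i = dTotOut a j)
    (i : N) (s : G) :
    ∑ j ∈ Finset.univ.filter (fun j => g j = s),
      (omegaHat g a (g i) s * thetaHatI g a j (g i)
        - (a i j : ℝ) / thetaHatO g a i s) = 0 := by
  classical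
  set R := Finset.univ.filter (fun j : N => g j = g i) with hR
  set S := Finset.univ.filter (fun j : N => g j = s) with hS
  have hiR : i ∈ R := Finset.mem_filter.mpr ⟨Finset.mem_univ i, rfl⟩
  set D : ℝ := (dTotOut a i : ℝ) with hDdef
  have hD : 0 < D := by rw [hDdef]; exact_mod_cast aux_dTotOut_pos g a hdO i
  set B : ℝ := ∑ j ∈ S, thetaHatI g a j (g i) with hBdef
  have hSne : S.Nonempty := aux_group_nonempty g a hdO i s
  have hB : 0 < B := Finset.sum_pos (fun j _ => aux_thetaI_pos g a hdO hdI j (g i)) hSne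
  set A : ℝ := ∑ i' ∈ R, thetaHatO g a i' s with hAdef
  set m : ℝ := (mEdges g a (g i) s : ℝ) with hmdef
  have hmNat : 0 < mEdges g a (g i) s := by
    rw [aux_mEdges_eq_sum_dOut]
    exact lt_of_lt_of_le (hdO i s) (Finset.single_le_sum (f := fun j => dOut g a j s)
      (fun _ _ => Nat.zero_le _) (Finset.mem_filter.mpr ⟨Finset.mem_univ i, rfl⟩))
  have hm : 0 < m := by rw [hmdef]; exact_mod_cast hmNat
  have hA : A = m / D := by
    rw [hAdef, hmdef, aux_mEdges_eq_sum_dOut]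
    push_cast
    rw [Finset.sum_div]
    refine Finset.sum_congr rfl (fun j hj => ?_)
    have hgj : g j = g i := (Finset.mem_filter.mp hj).2
    rw [thetaHatO, heqO j i hgj]
  have homega : omegaHat g a (g i) s = m / (A * B) := by
    rw [omegaHat, ← hR, ← hS, ← hmdef]
    congr 1
    rw [hAdef, hBdef, Finset.sum_mul]
    refine Finset.sum_congr rfl (fun i' _ => ?_)
    rw [Finset.mul_sum]
  have hdOut : (0 : ℝ) < (dOut g a i s : ℝ) := by exact_mod_cast hdO i s
  rw [Finset.sum_sub_distrib, ← Finset.mul_sum, ← hBdef, ← Finset.sum_div]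
  have hsum : ∑ j ∈ S, (a i j : ℝ) = (dOut g a i s : ℝ) := by
    rw [dOut, ← hS]; push_cast; rfl
  rw [hsum, homega, hA, thetaHatO, ← hDdef]
  field_simp
  ring

include hdO hdI in
lemma key_in (heqI : ∀ i j : N, g i = g j → dTotIn a i = dTotIn a j)
    (i : N) (s : G) :
    ∑ j ∈ Finset.univ.filter (fun j => g j = s),
      (omegaHat g a s (g i) * thetaHatO g a j (g i)
        - (a j i : ℝ) / thetaHatI g a i s) = 0 := by
  classical
  set R := Finset.univ.filter (fun j : N => g j = g i) with hR
  set S := Finset.univ.filter (fun j : N => g j = s) with hS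
  have hiR : i ∈ R := Finset.mem_filter.mpr ⟨Finset.mem_univ i, rfl⟩
  set D : ℝ := (dTotIn a i : ℝ) with hDdef
  have hD : 0 < D := by rw [hDdef]; exact_mod_cast aux_dTotIn_pos g a hdI i
  set A : ℝ := ∑ j ∈ S, thetaHatO g a j (g i) with hAdef
  have hSne : S.Nonempty := aux_group_nonempty g a hdO i s
  have hA : 0 < A := Finset.sum_pos (fun j _ => aux_thetaO_pos g a hdO hdI j (g i)) hSne
  set B : ℝ := ∑ j ∈ R, thetaHatI g a j s with hBdef
  set m : ℝ := (mEdges g a s (g i) : ℝ) with hmdef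
  have hmNat : 0 < mEdges g a s (g i) := by
    rw [aux_mEdges_eq_sum_dIn]
    exact lt_of_lt_of_le (hdI i s) (Finset.single_le_sum (f := fun j => dIn g a j s)
      (fun _ _ => Nat.zero_le _) (Finset.mem_filter.mpr ⟨Finset.mem_univ i, rfl⟩))
  have hm : 0 < m := by rw [hmdef]; exact_mod_cast hmNat
  have hB : B = m / D := by
    rw [hBdef, hmdef, aux_mEdges_eq_sum_dIn]
    push_cast
    rw [Finset.sum_div]
    refine Finset.sum_congr rfl (fun j hj => ?_)
    have hgj : g j = g i := (Finset.mem_filter.mp hj).2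
    rw [thetaHatI, heqI j i hgj]
  have homega : omegaHat g a s (g i) = m / (A * B) := by
    rw [omegaHat, ← hR, ← hS, ← hmdef]
    congr 1
    rw [hAdef, hBdef, Finset.sum_mul]
    refine Finset.sum_congr rfl (fun i' hi' => ?_)
    rw [Finset.mul_sum]
  have hdIn : (0 : ℝ) < (dIn g a i s : ℝ) := by exact_mod_cast hdI i s
  rw [Finset.sum_sub_distrib, ← Finset.mul_sum, ← hAdef, ← Finset.sum_div]
  have hsum : ∑ j ∈ S, (a j i : ℝ) = (dIn g a i s : ℝ) := by
    rw [dIn, ← hS]; push_cast; rfl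
  rw [hsum, homega, hB, thetaHatI, ← hDdef]
  field_simp
  ring

end Aux

/-- if within each group all total degrees are equal, then the
within-node fractions `θ̂_{i,s}^o = d_{i,s}^o / d_i^o`, `θ̂_{i,s}^i = d_{i,s}^i / d_i^i`
satisfy the node-level constraints and, together with `ω̂`, the maximum-likelihood
stationarity system of the node-constrained mixed-propensity model. -/
theorem node_constraint_mle_solution
    {N G : Type*} [Fintype N] [Fintype G] [DecidableEq G]
    (g : N → G) (a : N → N → ℕ)
    (hdO : ∀ i s, 0 < dOut g a i s) (hdI : ∀ i s, 0 < dIn g a i s)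
    (heqO : ∀ i j : N, g i = g j → dTotOut a i = dTotOut a j)
    (heqI : ∀ i j : N, g i = g j → dTotIn a i = dTotIn a j) :
    (∀ i : N, ∑ s : G, thetaHatO g a i s = 1) ∧
    (∀ i : N, ∑ s : G, thetaHatI g a i s = 1) ∧
    (∀ (i : N) (g₁ g₂ : G),
      ∑ j ∈ Finset.univ.filter (fun j => g j = g₁),
        (omegaHat g a (g i) g₁ * thetaHatI g a j (g i)
          - (a i j : ℝ) / thetaHatO g a i g₁)
      = ∑ j ∈ Finset.univ.filter (fun j => g j = g₂),
        (omegaHat g a (g i) g₂ * thetaHatI g a j (g i)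
          - (a i j : ℝ) / thetaHatO g a i g₂)) ∧
    (∀ (i : N) (g₁ g₂ : G),
      ∑ j ∈ Finset.univ.filter (fun j => g j = g₁),
        (omegaHat g a g₁ (g i) * thetaHatO g a j (g i)
          - (a j i : ℝ) / thetaHatI g a i g₁)
      = ∑ j ∈ Finset.univ.filter (fun j => g j = g₂),
        (omegaHat g a g₂ (g i) * thetaHatO g a j (g i)
          - (a j i : ℝ) / thetaHatI g a i g₂)) := by
  refine ⟨?_, ?_, ?_, ?_⟩
  · intro i
    have hD : (0 : ℝ) < (dTotOut a i : ℝ) := by exact_mod_cast aux_dTotOut_pos g a hdO i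
    simp only [thetaHatO]
    rw [← Finset.sum_div]
    rw [show ∑ s : G, (dOut g a i s : ℝ) = (dTotOut a i : ℝ) by
      push_cast [← aux_sum_dOut g a i]; rfl]
    exact div_self hD.ne'
  · intro i
    have hD : (0 : ℝ) < (dTotIn a i : ℝ) := by exact_mod_cast aux_dTotIn_pos g a hdI i
    simp only [thetaHatI]
    rw [← Finset.sum_div]
    rw [show ∑ s : G, (dIn g a i s : ℝ) = (dTotIn a i : ℝ) by
      push_cast [← aux_sum_dIn g a i]; rfl]
    exact div_self hD.ne'
  · intro i g₁ g₂
    rw [key_out g a hdO hdI heqO i g₁, key_out g a hdO hdI heqO i g₂]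
  · intro i g₁ g₂
    rw [key_in g a hdO hdI heqI i g₁, key_in g a hdO hdI heqI i g₂]
end
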